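/- arXiv:1507.06520 — 5 statements merged into one kernel-verified Lean document; each statement's English description precedes it below -/
import Mathlib

section
/- The matrix MᵀM satisfies: (i) MᵀM e_v = e_v for every vertex v, and (ii) MᵀM g = (d−1)^{−2} g for every g ∈ ℂ^{2B} that is orthogonal to e_v for all vertices v. Consequently the singular values of M are 1 with multiplicity n and 1/(d−1) with multiplicity n(d−1). -/
open scoped BigOperators Matrix

/-- The classical transition matrix `M` on directed bonds: `M_{bc} = 1/(d-1)` if the head of
`b` equals the tail of `c` and `c` is not the reversal of `b`, and `0` otherwise. -/
noncomputable def transM {V : Type} [DecidableEq V] (G : SimpleGraph V) (d : ℕ) :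
    Matrix G.Dart G.Dart ℂ := fun b c =>
  if b.snd = c.fst ∧ c ≠ b.symm then ((d : ℂ) - 1)⁻¹ else 0

/-- `e_v`: indicator vector of the directed bonds with tail `v`. -/
def eVec {V : Type} [DecidableEq V] (G : SimpleGraph V) (v : V) : G.Dart → ℂ :=
  fun b => if b.fst = v then 1 else 0

/-!
Let `E` be the `V × Dart` matrix whose rows are the `e_v` and `R` the permutation matrix of
dart reversal. Then `M = (d-1)⁻¹ R (EᵀE - 1)`; since `R` is orthogonal and `EEᵀ = d • 1` by
regularity, `MᵀM = (d-1)⁻² (EᵀE - 1)² = (d-1)⁻² ((d-2) EᵀE + 1)`. Hence `MᵀM Eᵀ = Eᵀ`, and `MᵀM`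
acts as `(d-1)⁻²` on `ker E`, the orthogonal complement of the `e_v`. As `rank E = n`, these two
subspaces have dimensions `n` and `nd - n`, adding up to the whole space, so they are the full
eigenspaces.
-/

open Module Finset

theorem Module.End.finrank_eigenspace_eq_of_le {K W : Type*} [Field K] [AddCommGroup W]
    [Module K W] [FiniteDimensional K W] {f : End K W} {a b : K} (hab : a ≠ b)
    {U U' : Submodule K W} (hU : U ≤ f.eigenspace a) (hU' : U' ≤ f.eigenspace b)
    (hdim : finrank K W ≤ finrank K U + finrank K U') :
    finrank K (f.eigenspace a) = finrank K U ∧ finrank K (f.eigenspace b) = finrank K U' := by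
  have hsum := Submodule.finrank_sup_add_finrank_inf_eq (f.eigenspace a) (f.eigenspace b)
  rw [(f.eigenspaces_iSupIndep.pairwiseDisjoint hab).eq_bot, finrank_bot] at hsum
  have := Submodule.finrank_le (f.eigenspace a ⊔ f.eigenspace b)
  have := Submodule.finrank_mono hU
  have := Submodule.finrank_mono hU'
  omega

theorem one_ne_inv_sub_one_sq {d : ℕ} (hd : 3 ≤ d) : (1 : ℂ) ≠ (((d : ℂ) - 1) ^ 2)⁻¹ := by
  intro h
  have hsq : ((d : ℂ) - 1) ^ 2 = 1 := inv_eq_one.mp h.symm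
  have hsq' : ((d : ℤ) - 1) ^ 2 = 1 := by exact_mod_cast hsq
  nlinarith

theorem SimpleGraph.IsRegularOfDegree.card_dart {V : Type} [Fintype V] {G : SimpleGraph V}
    [DecidableRel G.Adj] {d : ℕ} (hreg : G.IsRegularOfDegree d) :
    Fintype.card G.Dart = Fintype.card V * d := by
  simp [SimpleGraph.dart_card_eq_sum_degrees, hreg.degree_eq, mul_comm]

section TransferMatrix

variable {V : Type} [Fintype V] [DecidableEq V] (G : SimpleGraph V)

def tailMatrix : Matrix V G.Dart ℂ := Matrix.of (eVec G)

theorem transpose_tailMatrix_mul_self_apply (a b : G.Dart) :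
    ((tailMatrix G)ᵀ * tailMatrix G) a b = if a.fst = b.fst then 1 else 0 := by
  simp [tailMatrix, eVec, Matrix.mul_apply]

variable [DecidableRel G.Adj]

theorem tailMatrix_mulVec_apply (g : G.Dart → ℂ) (v : V) :
    (tailMatrix G *ᵥ g) v = ∑ b, starRingEnd ℂ (eVec G v b) * g b := by
  simp only [Matrix.mulVec, dotProduct, tailMatrix, Matrix.of_apply, eVec, apply_ite, map_one,
    map_zero]

def reversalMatrix : Matrix G.Dart G.Dart ℂ := Matrix.of fun a b => if a.symm = b then 1 else 0

theorem reversalMatrix_transpose_mul_self : (reversalMatrix G)ᵀ * reversalMatrix G = 1 := by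
  ext a b
  simp [reversalMatrix, Matrix.mul_apply, Matrix.one_apply, SimpleGraph.Dart.symm_involutive.eq_iff,
    eq_comm]

theorem transM_eq (d : ℕ) : transM G d =
    ((d : ℂ) - 1)⁻¹ • (reversalMatrix G * ((tailMatrix G)ᵀ * tailMatrix G - 1)) := by
  ext a b
  rw [Matrix.smul_apply, Matrix.mul_apply]
  simp only [reversalMatrix, Matrix.of_apply, ite_mul, one_mul, zero_mul, Finset.sum_ite_eq,
    mem_univ, if_true, Matrix.sub_apply, transpose_tailMatrix_mul_self_apply, Matrix.one_apply]
  by_cases hab : a.symm = b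
  · subst hab
    simp [transM]
  · simp [transM, hab, Ne.symm hab]

variable {G} {d : ℕ}

theorem tailMatrix_mul_transpose_self (hreg : G.IsRegularOfDegree d) :
    tailMatrix G * (tailMatrix G)ᵀ = (d : ℂ) • 1 := by
  ext u v
  rw [Matrix.mul_apply]
  by_cases huv : u = v
  · subst huv
    simp +contextual [tailMatrix, eVec, Finset.sum_boole, SimpleGraph.dart_fst_fiber_card_eq_degree,
      hreg.degree_eq]
  · simp +contextual [tailMatrix, eVec, huv, Ne.symm huv]

theorem rank_tailMatrix (hd : d ≠ 0) (hreg : G.IsRegularOfDegree d) :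
    (tailMatrix G).rank = Fintype.card V := by
  have hd' : (d : ℂ) ≠ 0 := by exact_mod_cast hd
  have hunit : IsUnit ((d : ℂ) • (1 : Matrix V V ℂ)) := by
    simpa [Algebra.smul_def] using (isUnit_iff_ne_zero.mpr hd').map (algebraMap ℂ (Matrix V V ℂ))
  refine le_antisymm (Matrix.rank_le_card_height _) ?_
  calc Fintype.card V = (tailMatrix G * (tailMatrix G)ᵀ).rank := by
        rw [tailMatrix_mul_transpose_self hreg, Matrix.rank_of_isUnit _ hunit]
    _ ≤ (tailMatrix G).rank := Matrix.rank_mul_le_left _ _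

theorem transpose_mul_transM_eq (hreg : G.IsRegularOfDegree d) :
    (transM G d)ᵀ * transM G d = (((d : ℂ) - 1) ^ 2)⁻¹ •
      (((d : ℂ) - 2) • ((tailMatrix G)ᵀ * tailMatrix G) + 1) := by
  rw [transM_eq]
  set E := tailMatrix G
  have hsq : (Eᵀ * E) * (Eᵀ * E) = (d : ℂ) • (Eᵀ * E) := by
    rw [Matrix.mul_assoc, ← Matrix.mul_assoc E, tailMatrix_mul_transpose_self hreg,
      Matrix.smul_mul, Matrix.one_mul, Matrix.mul_smul]
  rw [Matrix.transpose_smul, Matrix.smul_mul, Matrix.mul_smul, smul_smul, ← mul_inv,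
    ← sq, Matrix.transpose_mul, Matrix.mul_assoc, ← Matrix.mul_assoc (reversalMatrix G)ᵀ,
    reversalMatrix_transpose_mul_self, Matrix.one_mul]
  congr 1
  simp only [Matrix.transpose_sub, Matrix.transpose_mul, Matrix.transpose_transpose,
    Matrix.transpose_one, Matrix.sub_mul, Matrix.mul_sub, hsq, Matrix.mul_one, Matrix.one_mul,
    sub_smul]
  module

theorem transpose_mul_transM_mul_transpose_tailMatrix (hd : d ≠ 1)
    (hreg : G.IsRegularOfDegree d) :
    (transM G d)ᵀ * transM G d * (tailMatrix G)ᵀ = (tailMatrix G)ᵀ := by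
  have hd' : (d : ℂ) - 1 ≠ 0 := sub_ne_zero.mpr (by exact_mod_cast hd)
  rw [transpose_mul_transM_eq hreg, Matrix.smul_mul, Matrix.add_mul, Matrix.smul_mul,
    Matrix.mul_assoc, tailMatrix_mul_transpose_self hreg, Matrix.mul_smul, Matrix.mul_one,
    Matrix.one_mul, smul_smul]
  rw [show (((d : ℂ) - 2) * d) • (tailMatrix G)ᵀ + (tailMatrix G)ᵀ
      = (((d : ℂ) - 1) ^ 2) • (tailMatrix G)ᵀ by module,
    smul_smul, inv_mul_cancel₀ (pow_ne_zero 2 hd'), one_smul]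

theorem transpose_mul_transM_mulVec_eVec (hd : d ≠ 1) (hreg : G.IsRegularOfDegree d) (v : V) :
    ((transM G d)ᵀ * transM G d) *ᵥ eVec G v = eVec G v := by
  have hv : eVec G v = (tailMatrix G)ᵀ *ᵥ Pi.single v 1 := by
    rw [Matrix.mulVec_single_one]
    rfl
  rw [hv, Matrix.mulVec_mulVec, transpose_mul_transM_mul_transpose_tailMatrix hd hreg]

theorem transpose_mul_transM_mulVec_of_tailMatrix_mulVec_eq_zero (hreg : G.IsRegularOfDegree d)
    {g : G.Dart → ℂ} (hg : tailMatrix G *ᵥ g = 0) :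
    ((transM G d)ᵀ * transM G d) *ᵥ g = (((d : ℂ) - 1) ^ 2)⁻¹ • g := by
  rw [transpose_mul_transM_eq hreg, Matrix.smul_mulVec, Matrix.add_mulVec, Matrix.smul_mulVec,
    ← Matrix.mulVec_mulVec, hg, Matrix.mulVec_zero, smul_zero, zero_add, Matrix.one_mulVec]

theorem finrank_eigenspace_transpose_mul_transM (hd : 3 ≤ d) (hreg : G.IsRegularOfDegree d) :
    finrank ℂ (End.eigenspace ((transM G d)ᵀ * transM G d).mulVecLin 1) = Fintype.card V ∧
    finrank ℂ (End.eigenspace ((transM G d)ᵀ * transM G d).mulVecLin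
      (((d : ℂ) - 1) ^ 2)⁻¹) = Fintype.card V * (d - 1) := by
  set E := tailMatrix G
  have hrange : LinearMap.range Eᵀ.mulVecLin ≤
      End.eigenspace ((transM G d)ᵀ * transM G d).mulVecLin 1 := by
    rintro _ ⟨y, rfl⟩
    rw [End.mem_eigenspace_iff, one_smul, Matrix.mulVecLin_apply, Matrix.mulVecLin_apply,
      Matrix.mulVec_mulVec, transpose_mul_transM_mul_transpose_tailMatrix (by omega) hreg]
  have hker : LinearMap.ker E.mulVecLin ≤
      End.eigenspace ((transM G d)ᵀ * transM G d).mulVecLin (((d : ℂ) - 1) ^ 2)⁻¹ :=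
    fun g hg => End.mem_eigenspace_iff.mpr
      (transpose_mul_transM_mulVec_of_tailMatrix_mulVec_eq_zero hreg (LinearMap.mem_ker.mp hg))
  have hrank_nullity : Eᵀ.rank + finrank ℂ (LinearMap.ker E.mulVecLin) = Fintype.card G.Dart := by
    rw [Matrix.rank_transpose, Matrix.rank, LinearMap.finrank_range_add_finrank_ker,
      finrank_fintype_fun_eq_card]
  obtain ⟨hfinrank_one, hfinrank_inv⟩ :=
    End.finrank_eigenspace_eq_of_le (one_ne_inv_sub_one_sq hd) hrange hker
      (by rw [finrank_fintype_fun_eq_card]; exact hrank_nullity.ge)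
  have hrank : Eᵀ.rank = Fintype.card V := by
    rw [Matrix.rank_transpose, rank_tailMatrix (by omega) hreg]
  rw [hreg.card_dart, hrank] at hrank_nullity
  refine ⟨hfinrank_one.trans hrank, hfinrank_inv.trans ?_⟩
  rw [Nat.mul_sub_one]
  omega

end TransferMatrix

/-- `MᵀM` fixes each `e_v`, acts as `(d-1)⁻²` on the orthogonal complement of the `e_v`'s,
and consequently the singular values of `M` are `1` with multiplicity `n` and `1/(d-1)` with
multiplicity `n(d-1)` (stated via the dimensions of the eigenspaces of `MᵀM`). -/
theorem transpose_mul_transM {V : Type} [Fintype V] [DecidableEq V]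
    (G : SimpleGraph V) [DecidableRel G.Adj]
    (d : ℕ) (hd : 3 ≤ d) (hreg : G.IsRegularOfDegree d) :
    (∀ v : V, ((transM G d)ᵀ * transM G d).mulVec (eVec G v) = eVec G v) ∧
    (∀ g : G.Dart → ℂ, (∀ v : V, ∑ b : G.Dart, (starRingEnd ℂ) (eVec G v b) * g b = 0) →
      ((transM G d)ᵀ * transM G d).mulVec g = (((d : ℂ) - 1) ^ 2)⁻¹ • g) ∧
    Module.finrank ℂ
        (Module.End.eigenspace ((transM G d)ᵀ * transM G d).mulVecLin (1 : ℂ)) =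
      Fintype.card V ∧
    Module.finrank ℂ
        (Module.End.eigenspace ((transM G d)ᵀ * transM G d).mulVecLin
          ((((d : ℂ) - 1) ^ 2)⁻¹)) =
      Fintype.card V * (d - 1) := by
  refine ⟨transpose_mul_transM_mulVec_eVec (by omega) hreg, fun g hg => ?_,
    finrank_eigenspace_transpose_mul_transM hd hreg⟩
  refine transpose_mul_transM_mulVec_of_tailMatrix_mulVec_eq_zero hreg (funext fun v => ?_)
  rw [tailMatrix_mulVec_apply]
  exact hg v
end

section
/- Let a ∈ ℂ^n and set f = Σ_{v=1}^n a_v e_v ∈ ℂ^{2B}. Then for every integer t ≥ 0, ψ( Ĉ^t (a ⊕ 0) ) = M^t f, where a ⊕ 0 ∈ ℂ^{2n} is the vector with first n components a and last n components zero. -/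
open scoped BigOperators Matrix

/-- `ẽ_v`: indicator vector of the directed bonds with head `v`. -/
def eTilde {V : Type} [DecidableEq V] (G : SimpleGraph V) (v : V) : G.Dart → ℂ :=
  fun b => if b.snd = v then 1 else 0

/-- The adjacency (connectivity) matrix of `G`, over `ℂ`. -/
def adjC {V : Type} (G : SimpleGraph V) [DecidableRel G.Adj] : Matrix V V ℂ :=
  fun v w => if G.Adj v w then 1 else 0

/-- The `2n × 2n` block matrix `Ĉ = [[0, −(d−1)⁻¹ I],[I, (d−1)⁻¹ C]]`. -/
noncomputable def Chat {V : Type} [DecidableEq V] (G : SimpleGraph V) [DecidableRel G.Adj]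
    (d : ℕ) : Matrix (V ⊕ V) (V ⊕ V) ℂ :=
  Matrix.fromBlocks 0 (-(((d : ℂ) - 1)⁻¹ • (1 : Matrix V V ℂ))) (1 : Matrix V V ℂ)
    (((d : ℂ) - 1)⁻¹ • adjC G)

/-- The linear map `ψ : ℂ^{2n} → ℂ^{2B}`, `ψ(a ⊕ b) = ∑_v a_v e_v + ∑_v b_v ẽ_v`. -/
noncomputable def psiMap {V : Type} [Fintype V] [DecidableEq V] (G : SimpleGraph V)
    (x : V ⊕ V → ℂ) : G.Dart → ℂ :=
  (∑ v : V, x (Sum.inl v) • eVec G v) + ∑ v : V, x (Sum.inr v) • eTilde G v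

/-!
The map `ψ` intertwines `Ĉ` with `M`: `ψ ∘ Ĉ = M ∘ ψ` on a `d`-regular graph, and the claim follows
by induction on `t`, since `ψ (a ⊕ 0) = f`. At a dart `b`, `M` averages over the `d - 1`
non-backtracking continuations of `b`; the `−(d−1)⁻¹ I` block of `Ĉ` is exactly what removes the
backtracking term `b̄` from the neighbour sum produced by the `(d−1)⁻¹ C` block.
-/

open Finset

namespace SimpleGraph

variable {V : Type} [Fintype V] [DecidableEq V] (G : SimpleGraph V) [DecidableRel G.Adj]

lemma sum_dart_fst_eq_sum_neighborFinset {M : Type*} [AddCommMonoid M] (w : V) (g : V → M) :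
    ∑ c : G.Dart with c.fst = w, g c.snd = ∑ u ∈ G.neighborFinset w, g u := by
  refine sum_bij' (fun c _ => c.snd)
    (fun u hu => ⟨(w, u), (G.mem_neighborFinset w u).mp hu⟩) ?_ ?_ ?_ ?_ ?_
  · rintro c hc
    rw [mem_filter] at hc
    exact (G.mem_neighborFinset _ _).mpr (hc.2 ▸ c.adj)
  · intro u _
    simp
  · rintro c hc
    exact Dart.ext _ _ (Prod.ext (mem_filter.mp hc).2.symm rfl)
  all_goals intros; rfl

end SimpleGraph

section

variable {V : Type} [Fintype V] [DecidableEq V] (G : SimpleGraph V)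

lemma psiMap_apply (x : V ⊕ V → ℂ) (b : G.Dart) :
    psiMap G x b = x (Sum.inl b.fst) + x (Sum.inr b.snd) := by
  simp [psiMap, eVec, eTilde, Finset.sum_apply]

lemma psiMap_sum_elim_zero (a : V → ℂ) :
    psiMap G (Sum.elim a 0) = ∑ v, a v • eVec G v := by
  simp [psiMap]

variable [DecidableRel G.Adj] (d : ℕ)

lemma transM_mulVec_apply (f : G.Dart → ℂ) (b : G.Dart) :
    (transM G d *ᵥ f) b =
      ((d : ℂ) - 1)⁻¹ * ((∑ c : G.Dart with c.fst = b.snd, f c) - f b.symm) := by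
  have hsymm : b.symm ∈ ({c : G.Dart | c.fst = b.snd} : Finset G.Dart) := by simp
  have hfilter : ({c : G.Dart | b.snd = c.fst ∧ c ≠ b.symm} : Finset G.Dart) =
      ({c : G.Dart | c.fst = b.snd} : Finset G.Dart).erase b.symm := by
    ext c; simp [eq_comm, and_comm]
  rw [← sum_erase_eq_sub hsymm, ← hfilter, mul_sum, sum_filter]
  simp only [Matrix.mulVec, dotProduct, transM, ite_mul, zero_mul]

lemma Chat_mulVec_inl (x : V ⊕ V → ℂ) (v : V) :
    (Chat G d *ᵥ x) (Sum.inl v) = -((d : ℂ) - 1)⁻¹ * x (Sum.inr v) := by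
  simp [Chat, Matrix.fromBlocks_mulVec, Matrix.neg_mulVec, Matrix.smul_mulVec]

lemma Chat_mulVec_inr (x : V ⊕ V → ℂ) (v : V) :
    (Chat G d *ᵥ x) (Sum.inr v) =
      x (Sum.inl v) + ((d : ℂ) - 1)⁻¹ * ∑ u ∈ G.neighborFinset v, x (Sum.inr u) := by
  have hadj : adjC G = G.adjMatrix ℂ := rfl
  simp [Chat, Matrix.fromBlocks_mulVec, Matrix.smul_mulVec, hadj,
    SimpleGraph.adjMatrix_mulVec_apply]

variable {G d}

theorem psiMap_Chat_mulVec (hd : d ≠ 1) (hreg : G.IsRegularOfDegree d) (x : V ⊕ V → ℂ) :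
    psiMap G (Chat G d *ᵥ x) = transM G d *ᵥ psiMap G x := by
  have hd' : (d : ℂ) - 1 ≠ 0 := sub_ne_zero.mpr (by exact_mod_cast hd)
  funext b
  have hdarts : ∑ c : G.Dart with c.fst = b.snd, psiMap G x c =
      d * x (Sum.inl b.snd) + ∑ u ∈ G.neighborFinset b.snd, x (Sum.inr u) := by
    rw [sum_congr rfl fun c hc => by rw [psiMap_apply, (mem_filter.mp hc).2],
      sum_add_distrib, G.sum_dart_fst_eq_sum_neighborFinset b.snd (fun u => x (Sum.inr u))]
    simp [G.dart_fst_fiber_card_eq_degree, hreg b.snd]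
  rw [transM_mulVec_apply, hdarts, psiMap_apply, psiMap_apply, Chat_mulVec_inl, Chat_mulVec_inr]
  dsimp only [SimpleGraph.Dart.symm, Prod.fst_swap, Prod.snd_swap]
  field_simp
  ring

theorem psiMap_Chat_pow_mulVec (hd : d ≠ 1) (hreg : G.IsRegularOfDegree d) (t : ℕ)
    (x : V ⊕ V → ℂ) :
    psiMap G (Chat G d ^ t *ᵥ x) = transM G d ^ t *ᵥ psiMap G x := by
  induction t with
  | zero => simp
  | succ t ih =>
    rw [pow_succ', pow_succ', ← Matrix.mulVec_mulVec, ← Matrix.mulVec_mulVec,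
      psiMap_Chat_mulVec hd hreg, ih]

end

/-- `ψ(Ĉ^t (a ⊕ 0)) = M^t f` where `f = ∑_v a_v e_v`. -/
theorem psi_Chat_pow {V : Type} [Fintype V] [DecidableEq V]
    (G : SimpleGraph V) [DecidableRel G.Adj]
    (d : ℕ) (hd : 3 ≤ d) (hreg : G.IsRegularOfDegree d)
    (a : V → ℂ) (t : ℕ) :
    psiMap G ((Chat G d ^ t).mulVec (Sum.elim a 0)) =
      ((transM G d) ^ t).mulVec (∑ v : V, a v • eVec G v) := by
  rw [psiMap_Chat_pow_mulVec (by omega) hreg, psiMap_sum_elim_zero]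
end

section
/- Let d ≥ 3 be an integer and let β be a real number with 0 < β ≤ d − 1 − √(d−1). Let μ be a real number with |μ| ≤ d − β. Define the sequence (z_t)_{t≥0} by z_0 = 0, z_1 = 1, and z_t = (μ z_{t−1} − z_{t−2})/(d−1) for t ≥ 2. Then |z_t| ≤ t ( (d−1−β)/(d−1) )^{t−1} for every integer t ≥ 1. -/
/-!
Over `ℂ` factor the characteristic polynomial `X² - sX + a` of `z_{t+2} = s z_{t+1} - a z_t`
(here `s = μ/(d-1)`, `a = 1/(d-1)`) as `(X - λ₁)(X - λ₂)`. Then `z_{t+1} - λ₂ z_t = λ₁ ^ t`, so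
`|z_{t+1}| ≤ |λ₂| |z_t| + |λ₁| ^ t`, and `|z_{t+1}| ≤ (t+1) q ^ t` as soon as both roots have modulus
at most `q = (d-1-β)/(d-1)`. A non-real root has modulus `√a ≤ q`; a real root `x` satisfies
`(|x| - q)(q|x| - a) ≤ 0` because `q|s| ≤ q² + a`, hence `|x| ≤ q` since `a ≤ q²`.
-/

open Polynomial in
theorem IsAlgClosed.exists_add_eq_and_mul_eq {K : Type*} [Field K] [IsAlgClosed K] (s a : K) :
    ∃ L₁ L₂ : K, L₁ + L₂ = s ∧ L₁ * L₂ = a := by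
  obtain ⟨L, hL⟩ := IsAlgClosed.exists_root (C 1 * X ^ 2 + C (-s) * X + C a)
    (by rw [degree_quadratic one_ne_zero]; decide)
  refine ⟨L, s - L, by ring, ?_⟩
  simp only [IsRoot, eval_add, eval_mul, eval_C, eval_pow, eval_X] at hL
  linear_combination -hL

theorem abs_le_of_sq_sub_mul_add_eq_zero {s a q x : ℝ} (hq : 0 < q) (ha : a ≤ q ^ 2)
    (hs : q * |s| ≤ q ^ 2 + a) (hx : x ^ 2 - s * x + a = 0) : |x| ≤ q := by
  by_contra! hxq
  have hsx : q * |x| ^ 2 + q * a ≤ (q ^ 2 + a) * |x| := by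
    have : x ^ 2 + a ≤ |s| * |x| := by
      rw [← abs_mul]; linarith [le_abs_self (s * x)]
    rw [sq_abs]
    nlinarith [abs_nonneg x]
  nlinarith [mul_pos (sub_pos.2 hxq) (show 0 < q * |x| - a by nlinarith)]

namespace Complex

theorem norm_le_of_sq_sub_mul_add_eq_zero {s a q : ℝ} (hq : 0 < q) (ha : a ≤ q ^ 2)
    (hs : q * |s| ≤ q ^ 2 + a) {L : ℂ} (hL : L ^ 2 - s * L + a = 0) : ‖L‖ ≤ q := by
  have hre : L.re ^ 2 - L.im ^ 2 - s * L.re + a = 0 := by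
    simpa [sq] using congrArg re hL
  have him : (2 * L.re - s) * L.im = 0 := by
    have := congrArg im hL
    simp only [sq, add_im, sub_im, mul_im, ofReal_re, ofReal_im, zero_mul, add_zero, zero_im] at this
    linear_combination this
  rcases mul_eq_zero.mp him with hs_re | him_zero
  · have : ‖L‖ ^ 2 = a := by
      rw [Complex.sq_norm, normSq_apply]; linear_combination -hre + L.re * hs_re
    exact (pow_le_pow_iff_left₀ (norm_nonneg L) hq.le two_ne_zero).mp (this ▸ ha)
  · have hLre : L = L.re := Complex.ext rfl (by simpa using him_zero)
    rw [hLre, norm_real, Real.norm_eq_abs]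
    exact abs_le_of_sq_sub_mul_add_eq_zero hq ha hs (by simpa [him_zero] using hre)

end Complex

section Recurrence

variable {𝕜 : Type*} [NormedField 𝕜] {L₁ L₂ : 𝕜} {z : ℕ → 𝕜}

theorem sub_mul_eq_pow_of_recurrence (hz0 : z 0 = 0) (hz1 : z 1 = 1)
    (hrec : ∀ t, z (t + 2) = (L₁ + L₂) * z (t + 1) - L₁ * L₂ * z t) (t : ℕ) :
    z (t + 1) - L₂ * z t = L₁ ^ t := by
  induction t with
  | zero => simp [hz0, hz1]
  | succ t ih => rw [hrec, pow_succ, ← ih]; ring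

theorem norm_le_of_recurrence {q : ℝ} (h₁ : ‖L₁‖ ≤ q) (h₂ : ‖L₂‖ ≤ q)
    (hz0 : z 0 = 0) (hz1 : z 1 = 1)
    (hrec : ∀ t, z (t + 2) = (L₁ + L₂) * z (t + 1) - L₁ * L₂ * z t) (t : ℕ) :
    ‖z (t + 1)‖ ≤ (t + 1) * q ^ t := by
  have hq : 0 ≤ q := (norm_nonneg _).trans h₁
  induction t with
  | zero => simp [hz1]
  | succ t ih =>
    have hstep : z (t + 2) = L₂ * z (t + 1) + L₁ ^ (t + 1) := by
      rw [← sub_mul_eq_pow_of_recurrence hz0 hz1 hrec]; ring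
    calc ‖z (t + 2)‖ ≤ ‖L₂‖ * ‖z (t + 1)‖ + ‖L₁‖ ^ (t + 1) := by
          rw [hstep, ← norm_mul, ← norm_pow]; exact norm_add_le _ _
      _ ≤ q * ((t + 1) * q ^ t) + q ^ (t + 1) := by gcongr
      _ = ((t + 1 : ℕ) + 1) * q ^ (t + 1) := by push_cast; ring

end Recurrence

theorem abs_le_of_recurrence {s a q : ℝ} (hq : 0 < q) (ha : a ≤ q ^ 2)
    (hs : q * |s| ≤ q ^ 2 + a) {z : ℕ → ℝ} (hz0 : z 0 = 0) (hz1 : z 1 = 1)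
    (hrec : ∀ t, z (t + 2) = s * z (t + 1) - a * z t) (t : ℕ) :
    |z (t + 1)| ≤ (t + 1) * q ^ t := by
  obtain ⟨L₁, L₂, hsum, hprod⟩ := IsAlgClosed.exists_add_eq_and_mul_eq (s : ℂ) a
  have h₁ : ‖L₁‖ ≤ q := Complex.norm_le_of_sq_sub_mul_add_eq_zero hq ha hs
    (by linear_combination L₁ * hsum - hprod)
  have h₂ : ‖L₂‖ ≤ q := Complex.norm_le_of_sq_sub_mul_add_eq_zero hq ha hs
    (by linear_combination L₂ * hsum - hprod)
  have hrecℂ : ∀ t, (z (t + 2) : ℂ) = (L₁ + L₂) * z (t + 1) - L₁ * L₂ * z t := fun t => by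
    rw [hsum, hprod, hrec]; push_cast; ring
  simpa using norm_le_of_recurrence (z := fun t => (z t : ℂ)) h₁ h₂
    (by simp [hz0]) (by simp [hz1]) hrecℂ t

/-- Proposition 3 (`prop:drei`): bound on the solutions of the recurrence
`z_t = (μ z_{t−1} − z_{t−2})/(d−1)`, `z_0 = 0`, `z_1 = 1`:
if `|μ| ≤ d − β` with `0 < β ≤ d − 1 − √(d−1)`, then
`|z_t| ≤ t ((d−1−β)/(d−1))^{t−1}` for all `t ≥ 1`. -/
theorem recurrence_bound (d : ℕ) (hd : 3 ≤ d) (β : ℝ) (hβ : 0 < β)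
    (hβ' : β ≤ (d : ℝ) - 1 - Real.sqrt ((d : ℝ) - 1))
    (μ : ℝ) (hμ : |μ| ≤ (d : ℝ) - β)
    (z : ℕ → ℝ) (hz0 : z 0 = 0) (hz1 : z 1 = 1)
    (hrec : ∀ t : ℕ, z (t + 2) = (μ * z (t + 1) - z t) / ((d : ℝ) - 1)) :
    ∀ t : ℕ, 1 ≤ t →
      |z t| ≤ (t : ℝ) * (((d : ℝ) - 1 - β) / ((d : ℝ) - 1)) ^ (t - 1) := by
  set D : ℝ := d - 1 with hD_def
  clear_value D
  have hD : 0 < D := by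
    have : (3 : ℝ) ≤ d := by exact_mod_cast hd
    linarith
  have hsqrt_le : √D ≤ D - β := by linarith
  have hr : 0 < D - β := (Real.sqrt_pos.2 hD).trans_le hsqrt_le
  have ha : 1 / D ≤ ((D - β) / D) ^ 2 := by
    rw [div_pow, div_le_div_iff₀ hD (by positivity)]
    nlinarith [(Real.sqrt_le_iff.mp hsqrt_le).2]
  have hs : (D - β) / D * |μ / D| ≤ ((D - β) / D) ^ 2 + 1 / D := calc
    (D - β) / D * |μ / D| = (D - β) * |μ| / D ^ 2 := by rw [abs_div, abs_of_pos hD]; ring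
    _ ≤ ((D - β) ^ 2 + D) / D ^ 2 := by
      gcongr
      nlinarith [mul_le_mul_of_nonneg_left (show |μ| ≤ D - β + 1 by linarith) hr.le]
    _ = ((D - β) / D) ^ 2 + 1 / D := by field_simp
  intro t ht
  obtain ⟨t, rfl⟩ := Nat.exists_eq_add_of_le' ht
  simpa using abs_le_of_recurrence (div_pos hr hD) ha hs hz0 hz1
    (fun t => by rw [hrec]; ring) t
end

section
/- Suppose every eigenvalue μ of C possessing an eigenvector orthogonal to the all-ones vector satisfies |μ| ≤ d − β, where 0 < β ≤ d − 1 − √(d−1) (so in particular β < d − 2). Let f ∈ ℂ^{2B} satisfy Σ_b f_b = 0 (zero trace). Then for every integer t ≥ 1, ‖M^t f‖_{ℂ^{2B}} ≤ (5(d−1)/(2(d−2−β))) · ‖f‖_{ℂ^{2B}} · t · ( (d−1−β)/(d−1) )^{t}. -/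
open scoped BigOperators

/-- A matrix acting on Euclidean (ℓ²) space by matrix-vector multiplication. -/
noncomputable def act {ι : Type} [Fintype ι] (A : Matrix ι ι ℂ) (x : EuclideanSpace ℂ ι) :
    EuclideanSpace ℂ ι :=
  (WithLp.equiv 2 (ι → ℂ)).symm (A.mulVec (WithLp.equiv 2 (ι → ℂ) x))

/-!
For a function `p` on vertices write `p ∘ tail` and `p ∘ head` for its two lifts to bonds. If
`C x = μ x`, the span of `x ∘ tail` and `x ∘ head` is `M`-invariant and on it
`M² = (μ / (d - 1)) M - 1 / (d - 1)`, so `M ^ t` is expressed through the Lucas sequence of the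
roots of `(d - 1) z² - μ z + 1`. When `|μ| ≤ d - β` both roots have modulus at most
`ρ = (d - 1 - β) / (d - 1)`, which gives the factor `t ρ ^ t`. The orthogonal complement of all
lifts consists of the vectors whose sums over the bonds leaving and entering each vertex vanish;
on it `M` is `-1 / (d - 1)` times the reversal of bonds, which contracts by `1 / (d - 1) ≤ ρ`.
Over an orthonormal eigenbasis of `C` these pieces are mutually orthogonal, and `M` preserves
this. The spectral gap forces every eigenvector with eigenvalue `d` to be constant, and a
zero-trace `f` is orthogonal to the constant lifts, so no piece of `f` escapes the decay, and
Pythagoras assembles the bounds on the pieces.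
-/

open Finset Matrix
open scoped InnerProductSpace

namespace ObservableDecay

section Lucas

variable {R : Type*} [CommRing R]

def lucasSeq (A B : R) : ℕ → R
  | 0 => 0
  | 1 => 1
  | n + 2 => A * lucasSeq A B (n + 1) - B * lucasSeq A B n

@[simp] lemma lucasSeq_zero (A B : R) : lucasSeq A B 0 = 0 := rfl
@[simp] lemma lucasSeq_one (A B : R) : lucasSeq A B 1 = 1 := rfl
lemma lucasSeq_add_two (A B : R) (n : ℕ) :
    lucasSeq A B (n + 2) = A * lucasSeq A B (n + 1) - B * lucasSeq A B n := rfl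

lemma lucasSeq_succ_eq_mul_add_pow (l₁ l₂ : R) (t : ℕ) :
    lucasSeq (l₁ + l₂) (l₁ * l₂) (t + 1) = l₁ * lucasSeq (l₁ + l₂) (l₁ * l₂) t + l₂ ^ t := by
  induction t with
  | zero => simp
  | succ n ih => rw [lucasSeq_add_two, ih]; ring

lemma norm_lucasSeq_succ_le {𝕜 : Type*} [NormedField 𝕜] {l₁ l₂ : 𝕜} {ρ : ℝ}
    (h₁ : ‖l₁‖ ≤ ρ) (h₂ : ‖l₂‖ ≤ ρ) (t : ℕ) :
    ‖lucasSeq (l₁ + l₂) (l₁ * l₂) (t + 1)‖ ≤ ((t : ℝ) + 1) * ρ ^ t := by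
  have hρ : 0 ≤ ρ := (norm_nonneg _).trans h₁
  induction t with
  | zero => simp
  | succ n ih =>
    rw [lucasSeq_succ_eq_mul_add_pow]
    calc ‖l₁ * lucasSeq (l₁ + l₂) (l₁ * l₂) (n + 1) + l₂ ^ (n + 1)‖
        ≤ ‖l₁‖ * ‖lucasSeq (l₁ + l₂) (l₁ * l₂) (n + 1)‖ + ‖l₂‖ ^ (n + 1) := by
          simpa only [norm_mul, norm_pow] using
            norm_add_le (l₁ * lucasSeq (l₁ + l₂) (l₁ * l₂) (n + 1)) (l₂ ^ (n + 1))
      _ ≤ ρ * (((n : ℝ) + 1) * ρ ^ n) + ρ ^ (n + 1) := by gcongr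
      _ = ((n + 1 : ℕ) + 1) * ρ ^ (n + 1) := by push_cast; ring

lemma norm_mul_lucasSeq_le {𝕜 : Type*} [NormedField 𝕜] {l₁ l₂ : 𝕜} {ρ : ℝ}
    (h₁ : ‖l₁‖ ≤ ρ) (h₂ : ‖l₂‖ ≤ ρ) (t : ℕ) :
    ‖l₁ * l₂ * lucasSeq (l₁ + l₂) (l₁ * l₂) t‖ ≤ (t : ℝ) * ρ ^ (t + 1) := by
  have hρ : 0 ≤ ρ := (norm_nonneg _).trans h₁
  cases t with
  | zero => simp
  | succ n =>
    rw [norm_mul, norm_mul]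
    calc ‖l₁‖ * ‖l₂‖ * ‖lucasSeq (l₁ + l₂) (l₁ * l₂) (n + 1)‖ ≤ ρ * ρ * ((n + 1) * ρ ^ n) := by
          gcongr
          exact norm_lucasSeq_succ_le h₁ h₂ n
      _ = ((n + 1 : ℕ) : ℝ) * ρ ^ (n + 1 + 1) := by push_cast; ring

lemma pow_succ_mulVec_eq_lucasSeq {n : Type*} [Fintype n] [DecidableEq n] (M : Matrix n n R)
    (u : n → R) (A B : R) (h : M *ᵥ (M *ᵥ u) = A • M *ᵥ u - B • u) (r : ℕ) :
    (M ^ (r + 1)) *ᵥ u = lucasSeq A B (r + 1) • M *ᵥ u - (B * lucasSeq A B r) • u := by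
  induction r with
  | zero => simp
  | succ r ih =>
    rw [pow_succ', ← Matrix.mulVec_mulVec, ih, Matrix.mulVec_sub, Matrix.mulVec_smul,
      Matrix.mulVec_smul, h, lucasSeq_add_two]
    ext b
    simp only [Pi.sub_apply, Pi.smul_apply, smul_eq_mul]
    ring

end Lucas

lemma exists_add_eq_mul_eq {K : Type*} [Field K] [IsAlgClosed K] [NeZero (2 : K)] (m c : K) :
    ∃ l₁ l₂ : K, l₁ + l₂ = m ∧ l₁ * l₂ = c := by
  obtain ⟨s, hs⟩ := IsAlgClosed.exists_eq_mul_self (m ^ 2 - 4 * c)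
  have h2 : (2 : K) ≠ 0 := two_ne_zero
  refine ⟨(m + s) / 2, (m - s) / 2, by field_simp; ring, ?_⟩
  field_simp
  linear_combination hs

lemma exists_mul_add_mul_eq {D μ : ℝ} (hμ : |μ| < D) (α β : ℂ) :
    ∃ c e : ℂ, D * c + μ * e = α ∧ μ * c + D * e = β := by
  have hdet : ((D : ℂ) ^ 2 - (μ : ℂ) ^ 2) ≠ 0 := by
    have : μ ^ 2 < D ^ 2 := by
      rw [← sq_abs]
      exact pow_lt_pow_left₀ hμ (abs_nonneg μ) two_ne_zero
    exact_mod_cast (sub_pos.mpr this).ne'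
  refine ⟨(D * α - μ * β) / (D ^ 2 - μ ^ 2), (D * β - μ * α) / (D ^ 2 - μ ^ 2), ?_, ?_⟩ <;>
    field_simp <;> ring

/-- With `q = d - 1` and `s = d - 1 - β`, the roots of `q z² - μ z + 1` are the eigenvalues of
`M` on the lifts of a `μ`-eigenvector of `C`. -/
lemma norm_le_of_quadratic_eq_zero {q s μ : ℝ} (hs : 1 ≤ s) (hsq : s < q) (hqs : q ≤ s ^ 2)
    (hμ : |μ| ≤ s + 1) {l : ℂ} (hl : q * l ^ 2 - μ * l + 1 = 0) : ‖l‖ ≤ s / q := by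
  have hq0 : 0 < q := by linarith
  have hre : q * (l.re * l.re - l.im * l.im) - μ * l.re + 1 = 0 := by
    simpa [pow_two] using congrArg Complex.re hl
  have him : l.im * (2 * q * l.re - μ) = 0 := by
    have := congrArg Complex.im hl
    simp [pow_two] at this
    linear_combination this
  rw [← pow_le_pow_iff_left₀ (norm_nonneg l) (by positivity) two_ne_zero, Complex.sq_norm,
    Complex.normSq_apply, div_pow, le_div_iff₀ (by positivity)]
  -- A real root `z` satisfies `q z² + 1 ≤ (s + 1) |z|`, which fails for `|z| > s / q`; a
  -- non-real root comes with its conjugate, so `q |l|² = 1`.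
  rcases mul_eq_zero.mp him with h | h
  · rw [h] at hre ⊢
    have hsq_abs : l.re * l.re = |l.re| * |l.re| := (abs_mul_abs_self l.re).symm
    have hμa : μ * l.re ≤ (s + 1) * |l.re| :=
      (le_abs_self _).trans (by rw [abs_mul]; gcongr)
    have hz : q * |l.re| ≤ s := by
      by_contra! hz
      have hquad : q * |l.re| * |l.re| + 1 ≤ (s + 1) * |l.re| := by nlinarith
      nlinarith [mul_pos (sub_pos.mpr hz) (by linarith : 0 < q * |l.re| - 1),
        mul_le_mul_of_nonneg_left hquad hq0.le]
    nlinarith [mul_self_le_mul_self (by positivity) hz]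
  · have hnorm : q * (l.re * l.re + l.im * l.im) = 1 := by linear_combination -hre + l.re * h
    nlinarith

section InnerProduct

variable {𝕜 : Type*} [RCLike 𝕜]

lemma inner_toLp_mulVec {m n : Type*} [Fintype m] [Fintype n] (P : Matrix m n 𝕜) (p : n → 𝕜)
    (w : m → 𝕜) :
    ⟪WithLp.toLp 2 (P *ᵥ p), WithLp.toLp 2 w⟫_𝕜 = ⟪WithLp.toLp 2 p, WithLp.toLp 2 (Pᴴ *ᵥ w)⟫_𝕜 := by
  rw [EuclideanSpace.inner_toLp_toLp, EuclideanSpace.inner_toLp_toLp, star_mulVec, dotProduct_comm,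
    ← dotProduct_mulVec, dotProduct_comm]

lemma inner_toLp_const_mulVec_eq_zero {m n : Type*} [Fintype m] [Fintype n] {P : Matrix m n 𝕜}
    (hP : ∀ f : n → 𝕜, ∑ i, (P *ᵥ f) i = ∑ j, f j) {f : n → 𝕜} (hf : ∑ j, f j = 0) (κ : 𝕜) :
    ⟪WithLp.toLp 2 (fun _ : m => κ), WithLp.toLp 2 (P *ᵥ f)⟫_𝕜 = 0 := by
  rw [EuclideanSpace.inner_toLp_toLp, dotProduct]
  simp [← sum_mul, hP, hf]

lemma norm_toLp_mulVec_le_of_sum_norm_le_one {m n : Type*} [Fintype m] [Fintype n]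
    (P : Matrix m n 𝕜) (hrow : ∀ i, ∑ j, ‖P i j‖ ≤ 1) (hcol : ∀ j, ∑ i, ‖P i j‖ ≤ 1)
    (u : n → 𝕜) : ‖WithLp.toLp 2 (P *ᵥ u)‖ ≤ ‖WithLp.toLp 2 u‖ := by
  rw [EuclideanSpace.norm_eq, EuclideanSpace.norm_eq]
  gcongr
  have hrow_sq : ∀ i, ‖(P *ᵥ u) i‖ ^ 2 ≤ ∑ j, ‖P i j‖ * ‖u j‖ ^ 2 := fun i => by
    calc ‖(P *ᵥ u) i‖ ^ 2 ≤ (∑ j, ‖P i j‖ * ‖u j‖) ^ 2 := by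
          gcongr
          exact (norm_sum_le _ _).trans_eq (by simp only [norm_mul])
      _ ≤ (∑ j, ‖P i j‖) * ∑ j, ‖P i j‖ * ‖u j‖ ^ 2 :=
          sum_sq_le_sum_mul_sum_of_sq_le_mul _ (fun _ _ => norm_nonneg _)
            (fun _ _ => by positivity) (fun _ _ => by ring_nf; rfl)
      _ ≤ 1 * ∑ j, ‖P i j‖ * ‖u j‖ ^ 2 := by gcongr; exact hrow i
      _ = _ := one_mul _
  calc ∑ i, ‖(P *ᵥ u) i‖ ^ 2 ≤ ∑ i, ∑ j, ‖P i j‖ * ‖u j‖ ^ 2 := sum_le_sum fun i _ => hrow_sq i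
    _ = ∑ j, (∑ i, ‖P i j‖) * ‖u j‖ ^ 2 := by rw [sum_comm]; simp only [sum_mul]
    _ ≤ ∑ j, 1 * ‖u j‖ ^ 2 := by gcongr with j; exact hcol j
    _ = ∑ j, ‖u j‖ ^ 2 := by simp only [one_mul]

lemma norm_toLp_pow_succ_mulVec_le_of_mulVec_mulVec_eq {n : Type*} [Fintype n] [DecidableEq n]
    (M : Matrix n n 𝕜) (u : n → 𝕜) {l₁ l₂ : 𝕜} {ρ : ℝ} (h₁ : ‖l₁‖ ≤ ρ) (h₂ : ‖l₂‖ ≤ ρ)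
    (hM : M *ᵥ (M *ᵥ u) = (l₁ + l₂) • M *ᵥ u - (l₁ * l₂) • u)
    (hcontr : ‖WithLp.toLp 2 (M *ᵥ u)‖ ≤ ‖WithLp.toLp 2 u‖) (r : ℕ) :
    ‖WithLp.toLp 2 ((M ^ (r + 1)) *ᵥ u)‖ ≤
      (((r : ℝ) + 1) * ρ ^ r + r * ρ ^ (r + 1)) * ‖WithLp.toLp 2 u‖ := by
  have hS := norm_lucasSeq_succ_le h₁ h₂ r
  have hT := norm_mul_lucasSeq_le h₁ h₂ r
  rw [pow_succ_mulVec_eq_lucasSeq M u _ _ hM r, WithLp.toLp_sub, WithLp.toLp_smul,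
    WithLp.toLp_smul]
  calc ‖lucasSeq (l₁ + l₂) (l₁ * l₂) (r + 1) • WithLp.toLp 2 (M *ᵥ u)
          - (l₁ * l₂ * lucasSeq (l₁ + l₂) (l₁ * l₂) r) • WithLp.toLp 2 u‖
      ≤ ‖lucasSeq (l₁ + l₂) (l₁ * l₂) (r + 1)‖ * ‖WithLp.toLp 2 (M *ᵥ u)‖
        + ‖l₁ * l₂ * lucasSeq (l₁ + l₂) (l₁ * l₂) r‖ * ‖WithLp.toLp 2 u‖ :=
        (norm_sub_le _ _).trans_eq (by rw [norm_smul, norm_smul])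
    _ ≤ ((r : ℝ) + 1) * ρ ^ r * ‖WithLp.toLp 2 u‖ + r * ρ ^ (r + 1) * ‖WithLp.toLp 2 u‖ :=
        add_le_add (mul_le_mul hS hcontr (norm_nonneg _) ((norm_nonneg _).trans hS))
          (mul_le_mul_of_nonneg_right hT (norm_nonneg _))
    _ = _ := by ring

variable {E : Type*} [NormedAddCommGroup E] [InnerProductSpace 𝕜 E] {ι : Type*} [Fintype ι]

lemma norm_sum_sq_of_pairwise_inner_eq_zero (v : ι → E)
    (hv : Pairwise fun i j => ⟪v i, v j⟫_𝕜 = 0) : ‖∑ i, v i‖ ^ 2 = ∑ i, ‖v i‖ ^ 2 := by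
  classical
  have : ((‖∑ i, v i‖ : ℝ) : 𝕜) ^ 2 = ∑ i, ((‖v i‖ : ℝ) : 𝕜) ^ 2 := by
    simp only [← inner_self_eq_norm_sq_to_K, sum_inner, inner_sum]
    refine sum_congr rfl fun i _ => sum_eq_single i (fun j _ hji => hv hji) (by simp)
  exact_mod_cast this

lemma norm_sum_le_of_pairwise_inner_eq_zero (u w : ι → E)
    (hu : Pairwise fun i j => ⟪u i, u j⟫_𝕜 = 0) (hw : Pairwise fun i j => ⟪w i, w j⟫_𝕜 = 0)
    {C : ℝ} (hC : 0 ≤ C) (hle : ∀ i, ‖w i‖ ≤ C * ‖u i‖) : ‖∑ i, w i‖ ≤ C * ‖∑ i, u i‖ := by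
  rw [← pow_le_pow_iff_left₀ (norm_nonneg _) (by positivity) two_ne_zero, mul_pow,
    norm_sum_sq_of_pairwise_inner_eq_zero u hu, norm_sum_sq_of_pairwise_inner_eq_zero w hw,
    mul_sum]
  gcongr with i
  rw [← mul_pow]
  gcongr
  exact hle i

end InnerProduct

section Adjacency

lemma adjC_eq_adjMatrix {V : Type} (G : SimpleGraph V) [DecidableRel G.Adj] :
    adjC G = G.adjMatrix ℂ := rfl

variable {V : Type} [Fintype V] {G : SimpleGraph V} [DecidableRel G.Adj]

lemma adjC_mulVec_const {d : ℕ} (hreg : G.IsRegularOfDegree d) (c : ℂ) :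
    adjC G *ᵥ (fun _ => c) = (d : ℂ) • fun _ => c := by
  ext v
  rw [adjC_eq_adjMatrix, Pi.smul_apply, smul_eq_mul]
  exact G.adjMatrix_mulVec_const_apply_of_regular hreg

lemma sum_adjC_mulVec {d : ℕ} (hreg : G.IsRegularOfDegree d) (x : V → ℂ) :
    ∑ v, (adjC G *ᵥ x) v = d * ∑ v, x v := by
  calc ∑ v, (adjC G *ᵥ x) v = (fun _ => 1) ⬝ᵥ (adjC G *ᵥ x) := by simp [dotProduct]
    _ = (adjC G *ᵥ fun _ => 1) ⬝ᵥ x := by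
        rw [dotProduct_mulVec, ← mulVec_transpose, adjC_eq_adjMatrix, G.transpose_adjMatrix]
    _ = d * ∑ v, x v := by simp [adjC_mulVec_const hreg, dotProduct, mul_sum]

lemma exists_eq_const_of_adjC_mulVec_eq_degree_smul {d : ℕ} (hreg : G.IsRegularOfDegree d)
    {β : ℝ} (hβ : 0 < β)
    (hspec : ∀ (μ : ℂ) (x : V → ℂ), x ≠ 0 → (adjC G).mulVec x = μ • x →
      (∑ v : V, x v) = 0 → ‖μ‖ ≤ (d : ℝ) - β)
    {x : V → ℂ} (hx : adjC G *ᵥ x = (d : ℂ) • x) : ∃ c, x = fun _ => c := by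
  -- `|V| • x - (∑ x) • 1` is a zero-sum eigenvector for the eigenvalue `d`, so the gap kills it.
  rcases isEmpty_or_nonempty V with hV | hV
  · exact ⟨0, funext fun v => isEmptyElim v⟩
  have hn : (Fintype.card V : ℂ) ≠ 0 := by exact_mod_cast Fintype.card_ne_zero
  set y : V → ℂ := (Fintype.card V : ℂ) • x - (∑ v, x v) • fun _ => 1 with hy_def
  have hy_eig : adjC G *ᵥ y = (d : ℂ) • y := by
    rw [hy_def, mulVec_sub, mulVec_smul, mulVec_smul, hx, adjC_mulVec_const hreg, smul_sub,
      smul_comm (d : ℂ), smul_comm (d : ℂ)]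
  have hy_sum : ∑ v, y v = 0 := by
    simp only [hy_def, Pi.sub_apply, Pi.smul_apply, smul_eq_mul, mul_one, sum_sub_distrib,
      ← mul_sum, sum_const, card_univ, nsmul_eq_mul]
    ring
  have hy : y = 0 := by
    by_contra hy
    have := hspec d y hy hy_eig hy_sum
    rw [Complex.norm_natCast] at this
    linarith
  refine ⟨(∑ v, x v) / Fintype.card V, funext fun v => ?_⟩
  have hv := congrFun hy v
  simp only [hy_def, Pi.sub_apply, Pi.smul_apply, smul_eq_mul, mul_one, Pi.zero_apply] at hv
  field_simp
  linear_combination hv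

lemma abs_le_or_exists_eq_const {d : ℕ} (hreg : G.IsRegularOfDegree d) {β : ℝ} (hβ : 0 < β)
    (hspec : ∀ (μ : ℂ) (x : V → ℂ), x ≠ 0 → (adjC G).mulVec x = μ • x →
      (∑ v : V, x v) = 0 → ‖μ‖ ≤ (d : ℝ) - β)
    {x : V → ℂ} (hx0 : x ≠ 0) {μ : ℝ} (hx : adjC G *ᵥ x = (μ : ℂ) • x) :
    |μ| ≤ d - β ∨ ∃ κ, x = fun _ => κ := by
  by_cases hsum : ∑ v, x v = 0
  · left
    simpa using hspec μ x hx0 hx hsum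
  · right
    have hμ : (μ : ℂ) = d := by
      have h := sum_adjC_mulVec hreg x
      simp only [hx, Pi.smul_apply, smul_eq_mul, ← mul_sum] at h
      exact mul_right_cancel₀ hsum h
    exact exists_eq_const_of_adjC_mulVec_eq_degree_smul hreg hβ hspec (hμ ▸ hx)

end Adjacency

section Graph

variable {V : Type} {G : SimpleGraph V}

lemma eq_symm_comm {b c : G.Dart} : c = b.symm ↔ b = c.symm := by
  rw [eq_comm, SimpleGraph.Dart.symm_involutive.eq_iff]

variable (G)

def vertexLift (p q : V → ℂ) : G.Dart → ℂ := fun e => p e.fst + q e.snd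

variable {G}

def blockFamily {ι : Type} (h : G.Dart → ℂ) (x : ι → V → ℂ) (a b : ι → ℂ) : Option ι → G.Dart → ℂ
  | none => h
  | some i => vertexLift G (a i • x i) (b i • x i)

lemma sum_blockFamily {ι : Type} [Fintype ι] (h : G.Dart → ℂ) (x : ι → V → ℂ) (a b : ι → ℂ) :
    ∑ o, blockFamily h x a b o = h + ∑ i, vertexLift G (a i • x i) (b i • x i) :=
  Fintype.sum_option _

variable (G) [DecidableEq V]

def tailInc : Matrix V G.Dart ℂ := Matrix.of fun v e => if e.fst = v then 1 else 0

def headInc : Matrix V G.Dart ℂ := Matrix.of fun v e => if e.snd = v then 1 else 0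

def reversal : Matrix G.Dart G.Dart ℂ := Matrix.of fun b c => if c = b.symm then 1 else 0

variable {G}

lemma conjTranspose_reversal : (reversal G)ᴴ = reversal G := by
  ext b c
  simp only [reversal, conjTranspose_apply, of_apply, apply_ite star, star_one, star_zero]
  exact if_congr eq_symm_comm rfl rfl

lemma norm_transM_apply {d : ℕ} (hd : 1 ≤ d) (b c : G.Dart) :
    ‖transM G d b c‖ = if b.snd = c.fst ∧ c ≠ b.symm then ((d : ℝ) - 1)⁻¹ else 0 := by
  rw [transM, apply_ite norm, norm_zero, norm_inv, ← Nat.cast_pred hd, Complex.norm_natCast,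
    Nat.cast_pred hd]

variable [Fintype V]

lemma transM_eq (d : ℕ) :
    transM G d = ((d : ℂ) - 1)⁻¹ • ((headInc G)ᴴ * tailInc G - reversal G) := by
  ext b c
  have hsum : ((headInc G)ᴴ * tailInc G) b c = if b.snd = c.fst then 1 else 0 := by
    rw [mul_apply, Fintype.sum_eq_single b.snd]
    · simp [headInc, tailInc, eq_comm]
    · intro v hv
      simp [headInc, Ne.symm hv]
  rw [Matrix.smul_apply, Matrix.sub_apply, hsum, transM, reversal, of_apply, smul_eq_mul]
  by_cases hc : c = b.symm
  · subst hc
    simp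
  · simp [hc]

lemma vertexLift_eq (p q : V → ℂ) :
    vertexLift G p q = (tailInc G)ᴴ *ᵥ p + (headInc G)ᴴ *ᵥ q := by
  ext e
  simp [vertexLift, tailInc, headInc, mulVec, dotProduct, eq_comm]

variable [DecidableRel G.Adj]

lemma mul_reversal_apply {m : Type} (P : Matrix m G.Dart ℂ) (i : m) (e : G.Dart) :
    (P * reversal G) i e = P i e.symm := by
  rw [mul_apply, Fintype.sum_eq_single e.symm]
  · simp [reversal]
  · intro c hc
    simp [reversal, eq_symm_comm.not.mp hc]

lemma reversal_mulVec (h : G.Dart → ℂ) : reversal G *ᵥ h = fun b => h b.symm := by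
  ext b
  rw [mulVec, dotProduct, Fintype.sum_eq_single b.symm]
  · simp [reversal]
  · intro c hc
    simp [reversal, hc]

lemma reversal_mul_reversal : reversal G * reversal G = 1 := by
  ext b c
  rw [mul_reversal_apply]
  simp [reversal, one_apply, eq_comm, SimpleGraph.Dart.symm_involutive.injective.eq_iff]

lemma tailInc_mul_reversal : tailInc G * reversal G = headInc G := by
  ext v e
  rw [mul_reversal_apply]
  simp [tailInc, headInc]

lemma tailInc_mul_conjTranspose {d : ℕ} (hreg : G.IsRegularOfDegree d) :
    tailInc G * (tailInc G)ᴴ = (d : ℂ) • (1 : Matrix V V ℂ) := by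
  ext v w
  simp only [tailInc, mul_apply, conjTranspose_apply, of_apply, apply_ite star, star_one,
    star_zero, mul_ite, mul_one, mul_zero, Matrix.smul_apply, one_apply, smul_eq_mul]
  by_cases hvw : v = w
  · subst hvw
    simp only [if_true, ← sum_filter, sum_const, nsmul_eq_mul, mul_one]
    rw [filter_filter]
    simp only [and_self]
    rw [G.dart_fst_fiber_card_eq_degree, hreg v]
  · simp only [if_neg hvw]
    refine sum_eq_zero fun e _ => ?_
    split_ifs with h1 h2 <;> first | rfl | exact absurd (h2.symm.trans h1) hvw

lemma tailInc_mul_headInc_conjTranspose : tailInc G * (headInc G)ᴴ = adjC G := by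
  ext v w
  simp only [tailInc, headInc, adjC, mul_apply, conjTranspose_apply, of_apply, apply_ite star,
    star_one, star_zero, mul_ite, mul_one, mul_zero]
  by_cases hvw : G.Adj v w
  · rw [if_pos hvw, Fintype.sum_eq_single ⟨(v, w), hvw⟩]
    · simp
    · intro e he
      split_ifs with h1 h2 <;>
        first | rfl | exact absurd (SimpleGraph.Dart.ext _ _ (Prod.ext h2 h1)) he
  · rw [if_neg hvw]
    refine sum_eq_zero fun e _ => ?_
    split_ifs with h1 h2 <;> first | rfl | exact absurd (h2 ▸ h1 ▸ e.adj) hvw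

lemma conjTranspose_headInc : (headInc G)ᴴ = reversal G * (tailInc G)ᴴ := by
  rw [← tailInc_mul_reversal, conjTranspose_mul, conjTranspose_reversal]

lemma reversal_mul_conjTranspose_headInc : reversal G * (headInc G)ᴴ = (tailInc G)ᴴ := by
  rw [conjTranspose_headInc, ← Matrix.mul_assoc, reversal_mul_reversal, Matrix.one_mul]

lemma headInc_mul_conjTranspose {d : ℕ} (hreg : G.IsRegularOfDegree d) :
    headInc G * (headInc G)ᴴ = (d : ℂ) • (1 : Matrix V V ℂ) := by
  rw [conjTranspose_headInc, ← tailInc_mul_reversal, Matrix.mul_assoc,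
    ← Matrix.mul_assoc (reversal G), reversal_mul_reversal, Matrix.one_mul,
    tailInc_mul_conjTranspose hreg]

lemma headInc_mul_tailInc_conjTranspose : headInc G * (tailInc G)ᴴ = adjC G := by
  rw [← tailInc_mul_reversal, Matrix.mul_assoc, ← conjTranspose_headInc,
    tailInc_mul_headInc_conjTranspose]

lemma transM_mul_conjTranspose_tailInc {d : ℕ} (hd : d ≠ 1) (hreg : G.IsRegularOfDegree d) :
    transM G d * (tailInc G)ᴴ = (headInc G)ᴴ := by
  have hd1 : (d : ℂ) - 1 ≠ 0 := sub_ne_zero.mpr (by exact_mod_cast hd)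
  rw [transM_eq, Matrix.smul_mul, Matrix.sub_mul, Matrix.mul_assoc, tailInc_mul_conjTranspose hreg,
    ← conjTranspose_headInc, Matrix.mul_smul, Matrix.mul_one]
  nth_rw 2 [← one_smul ℂ (headInc G)ᴴ]
  rw [← sub_smul, smul_smul, inv_mul_cancel₀ hd1, one_smul]

lemma transM_mul_conjTranspose_headInc (d : ℕ) :
    transM G d * (headInc G)ᴴ = ((d : ℂ) - 1)⁻¹ • ((headInc G)ᴴ * adjC G - (tailInc G)ᴴ) := by
  rw [transM_eq, Matrix.smul_mul, Matrix.sub_mul, Matrix.mul_assoc,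
    tailInc_mul_headInc_conjTranspose, reversal_mul_conjTranspose_headInc]

lemma transM_mulVec_vertexLift {d : ℕ} (hd : d ≠ 1) (hreg : G.IsRegularOfDegree d) (p q : V → ℂ) :
    transM G d *ᵥ vertexLift G p q =
      vertexLift G (-((d : ℂ) - 1)⁻¹ • q) (p + ((d : ℂ) - 1)⁻¹ • (adjC G *ᵥ q)) := by
  rw [vertexLift_eq, vertexLift_eq, mulVec_add, mulVec_mulVec, mulVec_mulVec,
    transM_mul_conjTranspose_tailInc hd hreg, transM_mul_conjTranspose_headInc, smul_mulVec,
    sub_mulVec, ← mulVec_mulVec, mulVec_smul, mulVec_add, mulVec_smul]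
  module

def IsNull (h : G.Dart → ℂ) : Prop := tailInc G *ᵥ h = 0 ∧ headInc G *ᵥ h = 0

lemma IsNull.reversal_mulVec {h : G.Dart → ℂ} (hh : IsNull h) : IsNull (reversal G *ᵥ h) := by
  refine ⟨?_, ?_⟩
  · rw [mulVec_mulVec, tailInc_mul_reversal, hh.2]
  · rw [mulVec_mulVec, ← tailInc_mul_reversal, Matrix.mul_assoc, reversal_mul_reversal,
      Matrix.mul_one, hh.1]

lemma IsNull.smul {h : G.Dart → ℂ} (hh : IsNull h) (z : ℂ) : IsNull (z • h) :=
  ⟨by rw [mulVec_smul, hh.1, smul_zero], by rw [mulVec_smul, hh.2, smul_zero]⟩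

lemma norm_toLp_reversal_mulVec (h : G.Dart → ℂ) :
    ‖WithLp.toLp 2 (reversal G *ᵥ h)‖ = ‖WithLp.toLp 2 h‖ := by
  rw [reversal_mulVec, EuclideanSpace.norm_eq, EuclideanSpace.norm_eq]
  congr 1
  exact Equiv.sum_comp (SimpleGraph.Dart.symm_involutive.toPerm _) (fun b => ‖h b‖ ^ 2)

lemma transM_mulVec_of_isNull (d : ℕ) {h : G.Dart → ℂ} (hh : IsNull h) :
    transM G d *ᵥ h = -((d : ℂ) - 1)⁻¹ • (reversal G *ᵥ h) := by
  rw [transM_eq, smul_mulVec, sub_mulVec, ← mulVec_mulVec, hh.1, mulVec_zero, zero_sub, smul_neg,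
    neg_smul]

lemma pow_transM_mulVec_of_isNull {d : ℕ} (hd : 1 ≤ d) {h : G.Dart → ℂ} (hh : IsNull h) (t : ℕ) :
    IsNull ((transM G d ^ t) *ᵥ h) ∧
      ‖WithLp.toLp 2 ((transM G d ^ t) *ᵥ h)‖ = ((d : ℝ) - 1)⁻¹ ^ t * ‖WithLp.toLp 2 h‖ := by
  induction t with
  | zero => simpa using hh
  | succ t ih =>
    have hnorm : ‖-((d : ℂ) - 1)⁻¹‖ = ((d : ℝ) - 1)⁻¹ := by
      rw [norm_neg, norm_inv, ← Nat.cast_pred hd, Complex.norm_natCast, Nat.cast_pred hd]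
    rw [pow_succ', ← mulVec_mulVec, transM_mulVec_of_isNull d ih.1, WithLp.toLp_smul, norm_smul,
      hnorm, norm_toLp_reversal_mulVec, ih.2, pow_succ']
    exact ⟨ih.1.reversal_mulVec.smul _, by ring⟩

lemma inner_toLp_vertexLift {d : ℕ} (hreg : G.IsRegularOfDegree d) (p q p' q' : V → ℂ) :
    ⟪WithLp.toLp 2 (vertexLift G p q), WithLp.toLp 2 (vertexLift G p' q')⟫_ℂ =
      d * ⟪WithLp.toLp 2 p, WithLp.toLp 2 p'⟫_ℂ + ⟪WithLp.toLp 2 p, WithLp.toLp 2 (adjC G *ᵥ q')⟫_ℂ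
        + ⟪WithLp.toLp 2 q, WithLp.toLp 2 (adjC G *ᵥ p')⟫_ℂ
        + d * ⟪WithLp.toLp 2 q, WithLp.toLp 2 q'⟫_ℂ := by
  simp only [vertexLift_eq, WithLp.toLp_add, inner_add_left, inner_toLp_mulVec,
    conjTranspose_conjTranspose, mulVec_mulVec, tailInc_mul_conjTranspose hreg,
    headInc_mul_conjTranspose hreg, tailInc_mul_headInc_conjTranspose,
    headInc_mul_tailInc_conjTranspose, smul_mulVec, one_mulVec, WithLp.toLp_smul, inner_add_right,
    inner_smul_right]
  ring

lemma inner_toLp_vertexLift_of_isNull (p q : V → ℂ) {h : G.Dart → ℂ} (hh : IsNull h) :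
    ⟪WithLp.toLp 2 (vertexLift G p q), WithLp.toLp 2 h⟫_ℂ = 0 := by
  simp only [vertexLift_eq, WithLp.toLp_add, inner_add_left, inner_toLp_mulVec,
    conjTranspose_conjTranspose, hh.1, hh.2, WithLp.toLp_zero, inner_zero_right, add_zero]

lemma inner_toLp_vertexLift_smul_eq_zero {d : ℕ} (hreg : G.IsRegularOfDegree d) {x y : V → ℂ}
    (hxy : ⟪WithLp.toLp 2 x, WithLp.toLp 2 y⟫_ℂ = 0) {μ : ℂ} (hy : adjC G *ᵥ y = μ • y)
    (a b a' b' : ℂ) :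
    ⟪WithLp.toLp 2 (vertexLift G (a • x) (b • x)), WithLp.toLp 2 (vertexLift G (a' • y) (b' • y))⟫_ℂ
      = 0 := by
  simp only [inner_toLp_vertexLift hreg, mulVec_smul, hy, WithLp.toLp_smul, inner_smul_left,
    inner_smul_right, hxy]
  ring

lemma card_filter_fst_eq_and_ne {d : ℕ} (hreg : G.IsRegularOfDegree d) (e : G.Dart) :
    #{c : G.Dart | c.fst = e.fst ∧ c ≠ e} = d - 1 := by
  have : ({c : G.Dart | c.fst = e.fst ∧ c ≠ e} : Finset G.Dart) =
      ({c | c.fst = e.fst} : Finset G.Dart).erase e := by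
    ext c
    simp [and_comm]
  rw [this, card_erase_of_mem (by simp), G.dart_fst_fiber_card_eq_degree, hreg]

lemma sum_norm_transM_row {d : ℕ} (hd : 2 ≤ d) (hreg : G.IsRegularOfDegree d) (b : G.Dart) :
    ∑ c, ‖transM G d b c‖ = 1 := by
  have hcard : #{c : G.Dart | b.snd = c.fst ∧ c ≠ b.symm} = d - 1 := by
    simpa [eq_comm] using card_filter_fst_eq_and_ne hreg b.symm
  simp only [norm_transM_apply (by omega : 1 ≤ d), ← sum_filter, sum_const, hcard, nsmul_eq_mul]
  rw [Nat.cast_pred (by omega),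
    mul_inv_cancel₀ (sub_ne_zero.mpr (by exact_mod_cast (by omega : d ≠ 1)))]

lemma sum_norm_transM_col {d : ℕ} (hd : 2 ≤ d) (hreg : G.IsRegularOfDegree d) (c : G.Dart) :
    ∑ b, ‖transM G d b c‖ = 1 := by
  have hcard : #{b : G.Dart | b.fst = c.fst ∧ c ≠ b} = d - 1 := by
    simpa [ne_comm] using card_filter_fst_eq_and_ne hreg c
  rw [← Equiv.sum_comp (SimpleGraph.Dart.symm_involutive.toPerm _)]
  simp only [Function.Involutive.coe_toPerm, norm_transM_apply (by omega : 1 ≤ d),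
    SimpleGraph.Dart.symm_symm, SimpleGraph.Dart.symm_toProd, Prod.snd_swap, ← sum_filter,
    sum_const, hcard, nsmul_eq_mul]
  rw [Nat.cast_pred (by omega),
    mul_inv_cancel₀ (sub_ne_zero.mpr (by exact_mod_cast (by omega : d ≠ 1)))]

lemma norm_toLp_transM_mulVec_le {d : ℕ} (hd : 2 ≤ d) (hreg : G.IsRegularOfDegree d)
    (u : G.Dart → ℂ) : ‖WithLp.toLp 2 (transM G d *ᵥ u)‖ ≤ ‖WithLp.toLp 2 u‖ :=
  norm_toLp_mulVec_le_of_sum_norm_le_one _ (fun b => (sum_norm_transM_row hd hreg b).le)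
    (fun c => (sum_norm_transM_col hd hreg c).le) u

lemma transM_mulVec_vertexLift_smul {d : ℕ} (hd : d ≠ 1) (hreg : G.IsRegularOfDegree d)
    {x : V → ℂ} {μ : ℂ} (hx : adjC G *ᵥ x = μ • x) (a b : ℂ) :
    transM G d *ᵥ vertexLift G (a • x) (b • x) =
      vertexLift G ((-((d : ℂ) - 1)⁻¹ * b) • x) ((a + ((d : ℂ) - 1)⁻¹ * μ * b) • x) := by
  rw [transM_mulVec_vertexLift hd hreg, mulVec_smul, hx]
  congr 1 <;> module

lemma exists_pow_transM_mulVec_vertexLift_smul {d : ℕ} (hd : d ≠ 1)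
    (hreg : G.IsRegularOfDegree d) {x : V → ℂ} {μ : ℂ} (hx : adjC G *ᵥ x = μ • x) (a b : ℂ)
    (t : ℕ) : ∃ a' b' : ℂ,
      (transM G d ^ t) *ᵥ vertexLift G (a • x) (b • x) = vertexLift G (a' • x) (b' • x) := by
  induction t with
  | zero => exact ⟨a, b, one_mulVec _⟩
  | succ t ih =>
    obtain ⟨a', b', h⟩ := ih
    rw [pow_succ', ← mulVec_mulVec, h, transM_mulVec_vertexLift_smul hd hreg hx]
    exact ⟨_, _, rfl⟩

lemma transM_mulVec_transM_mulVec_vertexLift_smul {d : ℕ} (hd : d ≠ 1)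
    (hreg : G.IsRegularOfDegree d) {x : V → ℂ} {μ : ℂ} (hx : adjC G *ᵥ x = μ • x) (a b : ℂ) :
    transM G d *ᵥ (transM G d *ᵥ vertexLift G (a • x) (b • x)) =
      (μ * ((d : ℂ) - 1)⁻¹) • (transM G d *ᵥ vertexLift G (a • x) (b • x))
        - ((d : ℂ) - 1)⁻¹ • vertexLift G (a • x) (b • x) := by
  simp only [transM_mulVec_vertexLift_smul hd hreg hx]
  ext e
  simp only [vertexLift, Pi.sub_apply, Pi.smul_apply, smul_eq_mul]
  ring

lemma tailInc_mulVec_vertexLift {d : ℕ} (hreg : G.IsRegularOfDegree d) (p q : V → ℂ) :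
    tailInc G *ᵥ vertexLift G p q = (d : ℂ) • p + adjC G *ᵥ q := by
  rw [vertexLift_eq, mulVec_add, mulVec_mulVec, mulVec_mulVec, tailInc_mul_conjTranspose hreg,
    tailInc_mul_headInc_conjTranspose, smul_mulVec, one_mulVec]

lemma headInc_mulVec_vertexLift {d : ℕ} (hreg : G.IsRegularOfDegree d) (p q : V → ℂ) :
    headInc G *ᵥ vertexLift G p q = adjC G *ᵥ p + (d : ℂ) • q := by
  rw [vertexLift_eq, mulVec_add, mulVec_mulVec, mulVec_mulVec, headInc_mul_conjTranspose hreg,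
    headInc_mul_tailInc_conjTranspose, smul_mulVec, one_mulVec]

lemma sum_tailInc_mulVec (f : G.Dart → ℂ) : ∑ v, (tailInc G *ᵥ f) v = ∑ e, f e := by
  simp only [tailInc, mulVec, dotProduct, of_apply, ite_mul, one_mul, zero_mul]
  rw [sum_comm]
  simp

lemma sum_headInc_mulVec (f : G.Dart → ℂ) : ∑ v, (headInc G *ᵥ f) v = ∑ e, f e := by
  simp only [headInc, mulVec, dotProduct, of_apply, ite_mul, one_mul, zero_mul]
  rw [sum_comm]
  simp

end Graph

section Constants

noncomputable def decayRate (d β : ℝ) : ℝ := (d - 1 - β) / (d - 1)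

noncomputable def decayConst (d β : ℝ) : ℝ := 5 * (d - 1) / (2 * (d - 2 - β))

variable {d β : ℝ}

lemma one_add_inv_decayRate_le_decayConst (hβ : 0 ≤ β) (hβd : β < d - 2) :
    1 + (decayRate d β)⁻¹ ≤ decayConst d β := by
  rw [decayRate, decayConst, inv_div, one_add_div (by linarith),
    div_le_div_iff₀ (by linarith) (by linarith)]
  nlinarith

lemma lt_sub_two_of_le_sub_one_sub_sqrt (hd : 2 < d) (hβ : β ≤ d - 1 - Real.sqrt (d - 1)) :
    β < d - 2 := by
  have : 1 < Real.sqrt (d - 1) := by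
    rw [Real.lt_sqrt zero_le_one]
    linarith
  linarith

lemma decayRate_pos (hβ : 0 ≤ β) (hβd : β < d - 2) : 0 < decayRate d β :=
  div_pos (by linarith) (by linarith)

lemma one_le_decayConst (hβ : 0 ≤ β) (hβd : β < d - 2) : 1 ≤ decayConst d β :=
  le_trans (le_add_of_nonneg_right (inv_nonneg.mpr (decayRate_pos hβ hβd).le))
    (one_add_inv_decayRate_le_decayConst hβ hβd)

lemma succ_mul_pow_add_mul_pow_succ_le (hβ : 0 ≤ β) (hβd : β < d - 2) (r : ℕ) :
    ((r : ℝ) + 1) * decayRate d β ^ r + r * decayRate d β ^ (r + 1) ≤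
      decayConst d β * ((r : ℝ) + 1) * decayRate d β ^ (r + 1) := by
  have hρ := decayRate_pos hβ hβd
  have hK := one_add_inv_decayRate_le_decayConst hβ hβd
  calc ((r : ℝ) + 1) * decayRate d β ^ r + r * decayRate d β ^ (r + 1)
      ≤ (decayRate d β)⁻¹ * (((r : ℝ) + 1) * decayRate d β ^ (r + 1))
        + ((r : ℝ) + 1) * decayRate d β ^ (r + 1) := by
        have h : ((r : ℝ) + 1) * decayRate d β ^ r =
            (decayRate d β)⁻¹ * (((r : ℝ) + 1) * decayRate d β ^ (r + 1)) := by
          rw [pow_succ]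
          field_simp
        rw [h]
        gcongr
        linarith
    _ = (1 + (decayRate d β)⁻¹) * (((r : ℝ) + 1) * decayRate d β ^ (r + 1)) := by ring
    _ ≤ decayConst d β * ((r : ℝ) + 1) * decayRate d β ^ (r + 1) := by
        rw [mul_assoc]
        gcongr

lemma inv_sub_one_pow_le (hβ : 0 ≤ β) (hβd : β < d - 2) (r : ℕ) :
    (d - 1)⁻¹ ^ (r + 1) ≤ decayConst d β * ((r : ℝ) + 1) * decayRate d β ^ (r + 1) := by
  have hinv : (d - 1)⁻¹ ≤ decayRate d β := by
    rw [decayRate, inv_eq_one_div]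
    exact div_le_div_of_nonneg_right (by linarith) (by linarith)
  have hK : 1 ≤ decayConst d β * ((r : ℝ) + 1) :=
    one_le_mul_of_one_le_of_one_le (one_le_decayConst hβ hβd) (by linarith [r.cast_nonneg (α := ℝ)])
  calc (d - 1)⁻¹ ^ (r + 1) ≤ decayRate d β ^ (r + 1) :=
        pow_le_pow_left₀ (inv_nonneg.mpr (by linarith)) hinv _
    _ ≤ _ := le_mul_of_one_le_left (pow_nonneg (decayRate_pos hβ hβd).le _) hK

end Constants

section Decay

variable {V : Type} [Fintype V] [DecidableEq V] {G : SimpleGraph V} [DecidableRel G.Adj]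

lemma norm_toLp_pow_succ_transM_mulVec_vertexLift_le {d : ℕ} (hd : 3 ≤ d)
    (hreg : G.IsRegularOfDegree d) {β : ℝ} (hβ : 0 < β)
    (hβ' : β ≤ (d : ℝ) - 1 - Real.sqrt ((d : ℝ) - 1)) {x : V → ℂ} {μ : ℝ}
    (hx : adjC G *ᵥ x = (μ : ℂ) • x) (hμ : |μ| ≤ d - β) (a b : ℂ) (r : ℕ) :
    ‖WithLp.toLp 2 ((transM G d ^ (r + 1)) *ᵥ vertexLift G (a • x) (b • x))‖ ≤
      (((r : ℝ) + 1) * decayRate d β ^ r + r * decayRate d β ^ (r + 1)) *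
        ‖WithLp.toLp 2 (vertexLift G (a • x) (b • x))‖ := by
  have hd3 : (3 : ℝ) ≤ d := by exact_mod_cast hd
  have hsqrt : 1 ≤ Real.sqrt ((d : ℝ) - 1) := Real.one_le_sqrt.mpr (by linarith)
  have hsq : Real.sqrt ((d : ℝ) - 1) ^ 2 = (d : ℝ) - 1 := Real.sq_sqrt (by linarith)
  have hq : ((d : ℂ) - 1) ≠ 0 := sub_ne_zero.mpr (by exact_mod_cast (by omega : d ≠ 1))
  obtain ⟨l₁, l₂, hsum, hprod⟩ := exists_add_eq_mul_eq ((μ : ℂ) * ((d : ℂ) - 1)⁻¹) ((d : ℂ) - 1)⁻¹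
  have hroot : ∀ l, l = l₁ ∨ l = l₂ → ‖l‖ ≤ decayRate d β := by
    intro l hl
    refine norm_le_of_quadratic_eq_zero (q := (d : ℝ) - 1) (s := (d : ℝ) - 1 - β) (μ := μ)
      (by linarith) (by linarith) ?_ (by linarith) ?_
    · nlinarith
    · have hfac : ((d : ℂ) - 1) * ((l - l₁) * (l - l₂)) = 0 := by
        rcases hl with rfl | rfl <;> simp
      push_cast
      linear_combination hfac + ((d : ℂ) - 1) * l * hsum - ((d : ℂ) - 1) * hprod
        + (μ * l - 1) * mul_inv_cancel₀ hq
  refine norm_toLp_pow_succ_mulVec_le_of_mulVec_mulVec_eq _ _ (hroot l₁ (Or.inl rfl))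
    (hroot l₂ (Or.inr rfl)) ?_
    (norm_toLp_transM_mulVec_le (by omega) hreg _) r
  rw [hsum, hprod]
  exact transM_mulVec_transM_mulVec_vertexLift_smul (by omega) hreg hx a b

variable {ι : Type}

lemma pairwise_inner_toLp_blockFamily {d : ℕ} (hreg : G.IsRegularOfDegree d) {x : ι → V → ℂ}
    (hx : Pairwise fun i j => ⟪WithLp.toLp 2 (x i), WithLp.toLp 2 (x j)⟫_ℂ = 0) {μ : ι → ℂ}
    (hμ : ∀ i, adjC G *ᵥ x i = μ i • x i) {h : G.Dart → ℂ} (hh : IsNull h) (a b : ι → ℂ) :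
    Pairwise fun o o' => ⟪WithLp.toLp 2 (blockFamily h x a b o),
      WithLp.toLp 2 (blockFamily h x a b o')⟫_ℂ = 0 := by
  rintro (_ | i) (_ | j) hne
  · exact absurd rfl hne
  · exact inner_eq_zero_symm.mp (inner_toLp_vertexLift_of_isNull _ _ hh)
  · exact inner_toLp_vertexLift_of_isNull _ _ hh
  · exact inner_toLp_vertexLift_smul_eq_zero hreg (hx fun hij => hne (congrArg some hij)) (hμ j)
      _ _ _ _

variable [Fintype ι]

lemma norm_toLp_pow_succ_transM_mulVec_sum_blockFamily_le {d : ℕ} (hd : 3 ≤ d)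
    (hreg : G.IsRegularOfDegree d) {β : ℝ} (hβ : 0 < β)
    (hβ' : β ≤ (d : ℝ) - 1 - Real.sqrt ((d : ℝ) - 1)) {x : ι → V → ℂ}
    (hx : Pairwise fun i j => ⟪WithLp.toLp 2 (x i), WithLp.toLp 2 (x j)⟫_ℂ = 0) {μ : ι → ℝ}
    (hμ : ∀ i, adjC G *ᵥ x i = (μ i : ℂ) • x i) {g : G.Dart → ℂ} (hg : IsNull g) (c e : ι → ℂ)
    (hce : ∀ i, (c i = 0 ∧ e i = 0) ∨ |μ i| ≤ d - β) (r : ℕ) :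
    ‖WithLp.toLp 2 ((transM G d ^ (r + 1)) *ᵥ ∑ o, blockFamily g x c e o)‖ ≤
      decayConst d β * ((r : ℝ) + 1) * decayRate d β ^ (r + 1) *
        ‖WithLp.toLp 2 (∑ o, blockFamily g x c e o)‖ := by
  have hβd := lt_sub_two_of_le_sub_one_sub_sqrt (by exact_mod_cast (by omega : 2 < d)) hβ'
  choose a b hab using fun i =>
    exists_pow_transM_mulVec_vertexLift_smul (by omega) hreg (hμ i) (c i) (e i) (r + 1)
  have hnull := pow_transM_mulVec_of_isNull (d := d) (by omega) hg (r + 1)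
  have hevol : ∀ o, (transM G d ^ (r + 1)) *ᵥ blockFamily g x c e o =
      blockFamily ((transM G d ^ (r + 1)) *ᵥ g) x a b o := by
    rintro (_ | i)
    · rfl
    · exact hab i
  rw [mulVec_sum, WithLp.toLp_sum, WithLp.toLp_sum]
  simp only [hevol]
  refine norm_sum_le_of_pairwise_inner_eq_zero _ _
    (pairwise_inner_toLp_blockFamily hreg hx hμ hg c e)
    (pairwise_inner_toLp_blockFamily hreg hx hμ hnull.1 a b)
    (by have := decayRate_pos hβ.le hβd; have := one_le_decayConst hβ.le hβd; positivity) ?_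
  rintro (_ | i)
  · rw [blockFamily, blockFamily, hnull.2]
    gcongr
    exact inv_sub_one_pow_le hβ.le hβd r
  · rw [blockFamily, ← hab i, blockFamily]
    rcases hce i with ⟨hc, he⟩ | hμi
    · have h0 : vertexLift G (c i • x i) (e i • x i) = 0 := by
        ext
        simp [vertexLift, hc, he]
      simp [h0]
    · refine (norm_toLp_pow_succ_transM_mulVec_vertexLift_le hd hreg hβ hβ' (hμ i) hμi _ _
        r).trans ?_
      gcongr
      exact succ_mul_pow_add_mul_pow_succ_le hβ.le hβd r

variable {ι : Type} [Fintype ι]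

lemma exists_isNull_eq_sum_blockFamily {d : ℕ} (hreg : G.IsRegularOfDegree d) {β : ℝ}
    (hβ : 0 < β)
    (hspec : ∀ (μ : ℂ) (x : V → ℂ), x ≠ 0 → (adjC G).mulVec x = μ • x →
      (∑ v : V, x v) = 0 → ‖μ‖ ≤ (d : ℝ) - β)
    (bas : OrthonormalBasis ι ℂ (EuclideanSpace ℂ V)) {μ : ι → ℝ}
    (hμ : ∀ i, adjC G *ᵥ ⇑(bas i) = (μ i : ℂ) • ⇑(bas i)) {f : G.Dart → ℂ} (hf : ∑ e, f e = 0) :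
    ∃ (g : G.Dart → ℂ) (c e : ι → ℂ), IsNull g ∧
      f = ∑ o, blockFamily g (fun i => ⇑(bas i)) c e o ∧
      ∀ i, (c i = 0 ∧ e i = 0) ∨ |μ i| ≤ d - β := by
  have hexp : ∀ z : V → ℂ, z = ∑ i, ⟪bas i, WithLp.toLp 2 z⟫_ℂ • ⇑(bas i) := fun z => by
    simpa using congrArg WithLp.ofLp (bas.sum_repr' (WithLp.toLp 2 z)).symm
  -- The coefficients make the tail and head sums of the blocks match those of `f`; constant
  -- eigenvectors get zero coefficients because `f` has zero trace.
  have hcoef : ∀ i, ∃ c e : ℂ, (d : ℂ) * c + μ i * e = ⟪bas i, WithLp.toLp 2 (tailInc G *ᵥ f)⟫_ℂ ∧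
      (μ i : ℂ) * c + d * e = ⟪bas i, WithLp.toLp 2 (headInc G *ᵥ f)⟫_ℂ ∧
      ((c = 0 ∧ e = 0) ∨ |μ i| ≤ d - β) := fun i => by
    have hne : ⇑(bas i) ≠ 0 := fun h =>
      bas.orthonormal.ne_zero i (by simpa using congrArg (WithLp.toLp 2) h)
    rcases abs_le_or_exists_eq_const hreg hβ hspec hne (hμ i) with hμi | ⟨κ, hκ⟩
    · obtain ⟨c, e, h₁, h₂⟩ := exists_mul_add_mul_eq (D := d) (by linarith) _ _
      exact ⟨c, e, h₁, h₂, Or.inr hμi⟩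
    · have hbas : bas i = WithLp.toLp 2 (fun _ => κ) := by rw [← hκ]
      refine ⟨0, 0, ?_, ?_, Or.inl ⟨rfl, rfl⟩⟩ <;> rw [hbas]
      · simpa using (inner_toLp_const_mulVec_eq_zero sum_tailInc_mulVec hf κ).symm
      · simpa using (inner_toLp_const_mulVec_eq_zero sum_headInc_mulVec hf κ).symm
  choose c e hc he hce using hcoef
  refine ⟨f - ∑ i, vertexLift G (c i • ⇑(bas i)) (e i • ⇑(bas i)), c, e, ⟨?_, ?_⟩,
    by rw [sum_blockFamily, sub_add_cancel], hce⟩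
  · rw [mulVec_sub, mulVec_sum, hexp (tailInc G *ᵥ f), sub_eq_zero]
    refine sum_congr rfl fun i _ => ?_
    rw [tailInc_mulVec_vertexLift hreg, mulVec_smul, hμ, ← hc]
    module
  · rw [mulVec_sub, mulVec_sum, hexp (headInc G *ᵥ f), sub_eq_zero]
    refine sum_congr rfl fun i _ => ?_
    rw [headInc_mulVec_vertexLift hreg, mulVec_smul, hμ, ← he]
    module

end Decay

end ObservableDecay

open ObservableDecay Matrix
open scoped InnerProductSpace

/-- Theorem 4 (`thm:general`): if every eigenvalue `μ` of `C` with an eigenvector orthogonal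
to the all-ones vector satisfies `|μ| ≤ d − β`, with `0 < β ≤ d − 1 − √(d−1)`, then for every
zero-trace observable `f ∈ ℂ^{2B}` and every `t ≥ 1`,
`‖M^t f‖ ≤ (5(d−1)/(2(d−2−β))) ‖f‖ t ((d−1−β)/(d−1))^t`. -/
theorem general_observable_decay {V : Type} [Fintype V] [DecidableEq V]
    (G : SimpleGraph V) [DecidableRel G.Adj]
    (d : ℕ) (hd : 3 ≤ d) (hreg : G.IsRegularOfDegree d)
    (β : ℝ) (hβ : 0 < β) (hβ' : β ≤ (d : ℝ) - 1 - Real.sqrt ((d : ℝ) - 1))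
    (hspec : ∀ (μ : ℂ) (x : V → ℂ), x ≠ 0 → (adjC G).mulVec x = μ • x →
      (∑ v : V, x v) = 0 → ‖μ‖ ≤ (d : ℝ) - β)
    (f : EuclideanSpace ℂ G.Dart) (hf : (∑ b : G.Dart, f b) = 0) :
    ∀ t : ℕ, 1 ≤ t →
      ‖act ((transM G d) ^ t) f‖ ≤
        5 * ((d : ℝ) - 1) / (2 * ((d : ℝ) - 2 - β)) * ‖f‖ * (t : ℝ) *
          (((d : ℝ) - 1 - β) / ((d : ℝ) - 1)) ^ t := by
  intro t ht
  obtain ⟨r, rfl⟩ : ∃ r, t = r + 1 := ⟨t - 1, by omega⟩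
  have hA : (adjC G).IsHermitian := G.isHermitian_adjMatrix (R := ℂ)
  have hμ : ∀ i, adjC G *ᵥ ⇑(hA.eigenvectorBasis i) =
      (hA.eigenvalues i : ℂ) • ⇑(hA.eigenvectorBasis i) := fun i => by
    rw [hA.mulVec_eigenvectorBasis]
    ext v
    simp [Complex.real_smul]
  have horth : Pairwise fun i j => ⟪WithLp.toLp 2 ⇑(hA.eigenvectorBasis i),
      WithLp.toLp 2 ⇑(hA.eigenvectorBasis j)⟫_ℂ = 0 := fun i j hij => by
    simpa using hA.eigenvectorBasis.orthonormal.2 hij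
  obtain ⟨g, c, e, hg, hfg, hce⟩ :=
    exists_isNull_eq_sum_blockFamily hreg hβ hspec hA.eigenvectorBasis hμ hf
  have key := norm_toLp_pow_succ_transM_mulVec_sum_blockFamily_le hd hreg hβ hβ' horth hμ hg c e
    hce r
  rw [← hfg, WithLp.toLp_ofLp] at key
  calc ‖act (transM G d ^ (r + 1)) f‖ = ‖WithLp.toLp 2 ((transM G d ^ (r + 1)) *ᵥ ⇑f)‖ := rfl
    _ ≤ _ := key
    _ = _ := by rw [decayConst, decayRate]; push_cast; ring
end

section
/- Let N ≥ 1 and T ≥ 1 be integers, let U be an N×N unitary complex matrix, let {u_j}_{j=1}^N be an orthonormal basis of ℂ^N consisting of eigenvectors of U, and let A be any N×N complex matrix. Then (1/N) Σ_{j=1}^{N} |⟨u_j, A u_j⟩|² ≤ (1/N) Σ_{t=−T}^{T} ŵ_T(t) · Tr( A* U^t A U^{−t} ). -/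
/-!
Write `B_r = U^{-r} A U^r` and `C = ∑_{r<T} B_r`. Fejér's identity turns `∑_t ŵ_T(t) Tr(A* U^t A U^{-t})`
into `T⁻² ∑_{s,r<T} Tr(B_s* B_r) = T⁻² Tr(C* C)`. Computing the trace in the eigenbasis,
`Tr(C* C) = ∑_j ‖C u_j‖² ≥ ∑_j |⟨u_j, C u_j⟩|²` by Cauchy–Schwarz, and `⟨u_j, B_r u_j⟩ = ⟨u_j, A u_j⟩`
because `u_j` is an eigenvector of `U` with unimodular eigenvalue, so `⟨u_j, C u_j⟩ = T ⟨u_j, A u_j⟩`.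
-/

open scoped BigOperators Matrix

/-- The triangular weight `ŵ_T(t) = (1/T)(1 − |t|/T)` for `|t| < T`, and `0` otherwise. -/
noncomputable def wHatZ (T : ℕ) (t : ℤ) : ℝ :=
  if |t| < (T : ℤ) then (1 / (T : ℝ)) * (1 - (|t| : ℝ) / (T : ℝ)) else 0

/-- Integer powers of a unitary matrix: `U^t` for `t ≥ 0` and `(U*)^{−t} = (U^{−1})^{−t}`
for `t < 0`. -/
noncomputable def zPow {ι : Type} [Fintype ι] [DecidableEq ι] (U : Matrix ι ι ℂ) (t : ℤ) : Matrix ι ι ℂ :=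
  if 0 ≤ t then U ^ t.toNat else Uᴴ ^ (-t).toNat

open scoped InnerProductSpace
open Finset

lemma card_filter_natCast_sub_eq (T n : ℕ) :
    #{p ∈ range T ×ˢ range T | (p.1 : ℤ) - p.2 = n} = T - n := by
  have : {p ∈ range T ×ˢ range T | (p.1 : ℤ) - p.2 = n} =
      (range (T - n)).image fun r => (r + n, r) := by
    ext ⟨s, r⟩
    simp only [mem_filter, mem_product, mem_range, mem_image, Prod.mk.injEq]
    constructor
    · rintro ⟨⟨hs, hr⟩, h⟩
      exact ⟨r, by omega, by omega, rfl⟩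
    · rintro ⟨r, hr, rfl, rfl⟩
      omega
  rw [this, card_image_of_injective _ fun a b h => (Prod.ext_iff.mp h).2, card_range]

lemma card_filter_natCast_sub_eq_neg (T n : ℕ) :
    #{p ∈ range T ×ˢ range T | (p.1 : ℤ) - p.2 = -n} = T - n := by
  rw [← card_filter_natCast_sub_eq T n]
  refine card_nbij' Prod.swap Prod.swap ?_ ?_ (fun _ _ => rfl) (fun _ _ => rfl) <;>
  · rintro ⟨s, r⟩
    simp only [coe_filter, mem_product, mem_range, Set.mem_ofPred_eq, Prod.swap_prod_mk]
    omega

lemma card_filter_natCast_sub_eq_int (T : ℕ) (t : ℤ) :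
    #{p ∈ range T ×ˢ range T | (p.1 : ℤ) - p.2 = t} = T - t.natAbs := by
  obtain ⟨n, rfl | rfl⟩ := Int.eq_nat_or_neg t
  · exact card_filter_natCast_sub_eq T n
  · rw [Int.natAbs_neg, Int.natAbs_natCast]
    exact card_filter_natCast_sub_eq_neg T n

lemma wHatZ_eq_div {T : ℕ} {t : ℤ} (ht : t ∈ Icc (-(T : ℤ)) T) :
    wHatZ T t = ((T - t.natAbs : ℕ) : ℝ) / (T : ℝ) ^ 2 := by
  rw [mem_Icc] at ht
  have hle : t.natAbs ≤ T := by omega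
  unfold wHatZ
  split_ifs with h <;> rw [Int.abs_eq_natAbs] at h
  · have hT : (T : ℝ) ≠ 0 := by
      have : 0 < T := by omega
      positivity
    rw [Nat.cast_sub hle, ← Int.cast_abs, ← Nat.cast_natAbs]
    field_simp
  · have : t.natAbs = T := by omega
    simp [this]

/-- Fejér's identity: the triangular weights count the representations `t = s - r` with
`0 ≤ s, r < T`. -/
lemma sum_Icc_wHatZ_mul (T : ℕ) (f : ℤ → ℝ) :
    ∑ t ∈ Icc (-(T : ℤ)) T, wHatZ T t * f t =
      ((T : ℝ) ^ 2)⁻¹ * ∑ s ∈ range T, ∑ r ∈ range T, f (s - r) := by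
  have hmaps : ∀ p ∈ range T ×ˢ range T, (p.1 : ℤ) - p.2 ∈ Icc (-(T : ℤ)) T := by
    intro p hp
    simp only [mem_product, mem_range] at hp
    simp only [mem_Icc]
    omega
  rw [← sum_product' (range T) (range T) fun s r => f (s - r),
    ← sum_fiberwise_of_maps_to hmaps, mul_sum]
  refine sum_congr rfl fun t ht => ?_
  rw [sum_congr rfl fun p hp => congrArg f (mem_filter.mp hp).2, sum_const,
    card_filter_natCast_sub_eq_int, nsmul_eq_mul, wHatZ_eq_div ht]
  ring

section

variable {ι : Type} [Fintype ι]

lemma act_mul (A B : Matrix ι ι ℂ) (x : EuclideanSpace ℂ ι) :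
    act (A * B) x = act A (act B x) := by
  simp [act, Matrix.mulVec_mulVec]

variable [DecidableEq ι] {U : Matrix ι ι ℂ}

lemma act_eq_toEuclideanLin (A : Matrix ι ι ℂ) (x : EuclideanSpace ℂ ι) :
    act A x = Matrix.toEuclideanLin A x := rfl

lemma act_one (x : EuclideanSpace ℂ ι) : act 1 x = x := by
  simp [act]

lemma act_smul (A : Matrix ι ι ℂ) (c : ℂ) (x : EuclideanSpace ℂ ι) :
    act A (c • x) = c • act A x :=
  map_smul (Matrix.toEuclideanLin A) c x

lemma act_sum_left {κ : Type*} (s : Finset κ) (A : κ → Matrix ι ι ℂ) (x : EuclideanSpace ℂ ι) :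
    act (∑ k ∈ s, A k) x = ∑ k ∈ s, act (A k) x := by
  simp only [act_eq_toEuclideanLin, map_sum, LinearMap.sum_apply]

lemma inner_act_conjTranspose (A : Matrix ι ι ℂ) (x y : EuclideanSpace ℂ ι) :
    ⟪x, act Aᴴ y⟫_ℂ = ⟪act A x, y⟫_ℂ := by
  rw [act_eq_toEuclideanLin, act_eq_toEuclideanLin, Matrix.toEuclideanLin_conjTranspose_eq_adjoint,
    LinearMap.adjoint_inner_right]

lemma trace_eq_sum_inner_act {κ : Type*} [Fintype κ] (M : Matrix ι ι ℂ)
    (b : OrthonormalBasis κ ℂ (EuclideanSpace ℂ ι)) :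
    M.trace = ∑ i, ⟪b i, act M (b i)⟫_ℂ := by
  simp only [act_eq_toEuclideanLin, ← LinearMap.trace_eq_sum_inner, Matrix.toLpLin_eq_toLin,
    Matrix.trace_toLin_eq]

lemma act_pow_of_eq_smul {x : EuclideanSpace ℂ ι} {μ : ℂ}
    (h : act U x = μ • x) (n : ℕ) : act (U ^ n) x = μ ^ n • x := by
  induction n with
  | zero => simp [act_one]
  | succ n ih => rw [pow_succ, act_mul, h, act_smul, ih, smul_smul, ← pow_succ']

lemma sum_norm_inner_act_sq_le_re_trace {u : ι → EuclideanSpace ℂ ι} (hu : Orthonormal ℂ u)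
    (C : Matrix ι ι ℂ) :
    ∑ j, ‖⟪u j, act C (u j)⟫_ℂ‖ ^ 2 ≤ (Cᴴ * C).trace.re := by
  let b : OrthonormalBasis ι ℂ (EuclideanSpace ℂ ι) :=
    OrthonormalBasis.mk hu (hu.linearIndependent.span_eq_top_of_card_eq_finrank' (by simp)).ge
  have hb : ⇑b = u := OrthonormalBasis.coe_mk _ _
  have htrace : (Cᴴ * C).trace = ∑ j, ((‖act C (u j)‖ ^ 2 : ℝ) : ℂ) := by
    rw [trace_eq_sum_inner_act _ b, hb]
    refine sum_congr rfl fun j _ => ?_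
    rw [act_mul, inner_act_conjTranspose, inner_self_eq_norm_sq_to_K]
    push_cast; rfl
  rw [htrace, ← Complex.ofReal_sum, Complex.ofReal_re]
  refine sum_le_sum fun j _ => pow_le_pow_left₀ (norm_nonneg _) ?_ 2
  simpa [hu.1 j] using norm_inner_le_norm (𝕜 := ℂ) (u j) (act C (u j))

lemma inner_act_conj_of_act_eq_smul {V : Matrix ι ι ℂ} (hV : V ∈ Matrix.unitaryGroup ι ℂ)
    {x : EuclideanSpace ℂ ι} (hx : x ≠ 0) {c : ℂ} (hVx : act V x = c • x) (A : Matrix ι ι ℂ) :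
    ⟪x, act (Vᴴ * A * V) x⟫_ℂ = ⟪x, act A x⟫_ℂ := by
  have hconj : ∀ B : Matrix ι ι ℂ,
      ⟪x, act (Vᴴ * B * V) x⟫_ℂ = starRingEnd ℂ c * c * ⟪x, act B x⟫_ℂ := fun B => by
    rw [Matrix.mul_assoc, act_mul, inner_act_conjTranspose, act_mul, hVx, act_smul,
      inner_smul_left, inner_smul_right, mul_assoc]
  -- taking `B = 1` shows that `|c| = 1`
  have hc : starRingEnd ℂ c * c = 1 := by
    have h1 := hconj 1
    rw [Matrix.mul_one, ← Matrix.star_eq_conjTranspose, Matrix.UnitaryGroup.star_mul_self ⟨V, hV⟩,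
      act_one] at h1
    exact (mul_left_eq_self₀.mp h1.symm).resolve_right (inner_self_ne_zero.mpr hx)
  rw [hconj, hc, one_mul]

lemma zPow_eq_coe_zpow (hU : U ∈ Matrix.unitaryGroup ι ℂ) (t : ℤ) :
    zPow U t = ((⟨U, hU⟩ : Matrix.unitaryGroup ι ℂ) ^ t : Matrix.unitaryGroup ι ℂ) := by
  obtain ⟨n, rfl | rfl⟩ := Int.eq_nat_or_neg t
  · simp [zPow]
  · rcases n.eq_zero_or_pos with rfl | hn
    · simp [zPow]
    · simp [zPow, hn.ne', Matrix.star_eq_conjTranspose]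

lemma zPow_natCast_sub (hU : U ∈ Matrix.unitaryGroup ι ℂ) (s r : ℕ) :
    zPow U (s - r) = U ^ s * Uᴴ ^ r := by
  simp [zPow_eq_coe_zpow hU, zpow_sub, Matrix.star_eq_conjTranspose]

lemma trace_zPow_conj_natCast_sub (hU : U ∈ Matrix.unitaryGroup ι ℂ) (A : Matrix ι ι ℂ)
    (s r : ℕ) :
    (Aᴴ * zPow U (s - r) * A * zPow U (-(s - r))).trace =
      (((U ^ s)ᴴ * A * U ^ s)ᴴ * ((U ^ r)ᴴ * A * U ^ r)).trace := by
  rw [neg_sub, zPow_natCast_sub hU, zPow_natCast_sub hU]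
  simp only [Matrix.conjTranspose_mul, Matrix.conjTranspose_conjTranspose, Matrix.conjTranspose_pow,
    Matrix.mul_assoc]
  rw [Matrix.trace_mul_comm (Uᴴ ^ s)]
  simp only [Matrix.mul_assoc]

def conjSum (U A : Matrix ι ι ℂ) (T : ℕ) : Matrix ι ι ℂ :=
  ∑ r ∈ range T, (U ^ r)ᴴ * A * U ^ r

lemma inner_act_conjSum (hU : U ∈ Matrix.unitaryGroup ι ℂ) {x : EuclideanSpace ℂ ι} (hx : x ≠ 0)
    {μ : ℂ} (hUx : act U x = μ • x) (A : Matrix ι ι ℂ) (T : ℕ) :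
    ⟪x, act (conjSum U A T) x⟫_ℂ = T * ⟪x, act A x⟫_ℂ := by
  simp only [conjSum, act_sum_left, inner_sum]
  rw [sum_congr rfl fun r _ =>
    inner_act_conj_of_act_eq_smul (pow_mem hU r) hx (act_pow_of_eq_smul hUx r) A]
  simp

lemma sum_wHatZ_mul_re_trace (hU : U ∈ Matrix.unitaryGroup ι ℂ) (A : Matrix ι ι ℂ) (T : ℕ) :
    ∑ t ∈ Icc (-(T : ℤ)) T, wHatZ T t * (Aᴴ * zPow U t * A * zPow U (-t)).trace.re =
      ((T : ℝ) ^ 2)⁻¹ * ((conjSum U A T)ᴴ * conjSum U A T).trace.re := by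
  simp only [sum_Icc_wHatZ_mul, conjSum, Matrix.conjTranspose_sum, sum_mul_sum, Matrix.trace_sum,
    Complex.re_sum, trace_zPow_conj_natCast_sub hU]

end

theorem variance_trace_bound_general {N : ℕ} (T : ℕ) (hT : 1 ≤ T)
    (U : Matrix (Fin N) (Fin N) ℂ) (hU : U ∈ Matrix.unitaryGroup (Fin N) ℂ)
    (u : Fin N → EuclideanSpace ℂ (Fin N)) (hu : Orthonormal ℂ u)
    (heig : ∀ j : Fin N, ∃ μ : ℂ, act U (u j) = μ • u j)
    (A : Matrix (Fin N) (Fin N) ℂ) :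
    (1 / (N : ℝ)) * ∑ j : Fin N, ‖(inner ℂ (u j) (act A (u j)) : ℂ)‖ ^ 2 ≤
      (1 / (N : ℝ)) * ∑ t ∈ Finset.Icc (-(T : ℤ)) (T : ℤ),
        wHatZ T t * (Matrix.trace (Aᴴ * zPow U t * A * zPow U (-t))).re := by
  choose μ hμ using heig
  have hT0 : (T : ℝ) ≠ 0 := by positivity
  have hdiag : ∀ j, ‖⟪u j, act A (u j)⟫_ℂ‖ ^ 2 =
      ((T : ℝ) ^ 2)⁻¹ * ‖⟪u j, act (conjSum U A T) (u j)⟫_ℂ‖ ^ 2 := fun j => by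
    rw [inner_act_conjSum hU (hu.ne_zero j) (hμ j), norm_mul, Complex.norm_natCast]
    field_simp
  rw [sum_wHatZ_mul_re_trace hU, sum_congr rfl fun j _ => hdiag j, ← mul_sum]
  gcongr
  exact sum_norm_inner_act_sq_le_re_trace hu _

/-- Lemma A (`lem:A`): for an `N × N` unitary matrix `U`, an orthonormal basis `{u_j}` of
eigenvectors of `U`, and any `N × N` matrix `A`,
`(1/N) ∑_j |⟨u_j, A u_j⟩|² ≤ (1/N) ∑_{t=−T}^{T} ŵ_T(t) Tr(A* U^t A U^{−t})`. -/
theorem variance_trace_bound {N : ℕ} (hN : 1 ≤ N) (T : ℕ) (hT : 1 ≤ T)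
    (U : Matrix (Fin N) (Fin N) ℂ) (hU : U ∈ Matrix.unitaryGroup (Fin N) ℂ)
    (u : Fin N → EuclideanSpace ℂ (Fin N)) (hu : Orthonormal ℂ u)
    (heig : ∀ j : Fin N, ∃ μ : ℂ, act U (u j) = μ • u j)
    (A : Matrix (Fin N) (Fin N) ℂ) :
    (1 / (N : ℝ)) * ∑ j : Fin N, ‖(inner ℂ (u j) (act A (u j)) : ℂ)‖ ^ 2 ≤
      (1 / (N : ℝ)) * ∑ t ∈ Finset.Icc (-(T : ℤ)) (T : ℤ),
        wHatZ T t * (Matrix.trace (Aᴴ * zPow U t * A * zPow U (-t))).re :=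
  variance_trace_bound_general T hT U hU u hu heig A
end
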